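/- arXiv:2206.12441 — 7 statements merged into one kernel-verified Lean document; each statement's English description precedes it below -/
import Mathlib

section
/- Let d ≥ 1 and let B and C be real symmetric d×d matrices such that C is positive definite and B − C is positive semidefinite (written B ⪰ C ≻ 0). Then for every nonzero x ∈ ℝ^d one has (xᵀ B x)/(xᵀ C x) ≤ det(B)/det(C); equivalently, sup_{x ≠ 0} (xᵀ B x)/(xᵀ C x) ≤ det(B)/det(C). -/
/-!
Write `C = S²` with `S = √C` and put `M = S⁻¹ B S⁻¹`. Then `M ⪰ 1`, so every eigenvalue of `M`
is at least `1`; hence each eigenvalue is bounded by their product `det M = det B / det C`, i.e.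
`M ⪯ (det B / det C) • 1`. Conjugating back by `S` gives `B ⪯ (det B / det C) • C`, and evaluating
both quadratic forms at `x` gives the claim.
-/

open Matrix
open scoped MatrixOrder ComplexOrder

namespace Matrix

variable {n : Type*} [Fintype n]

theorem star_dotProduct_mulVec_le_of_le {𝕜 : Type*} [RCLike 𝕜] {A B : Matrix n n 𝕜}
    (hAB : A ≤ B) (x : n → 𝕜) : star x ⬝ᵥ A *ᵥ x ≤ star x ⬝ᵥ B *ᵥ x := by
  have h := (le_iff.mp hAB).dotProduct_mulVec_nonneg x
  rwa [sub_mulVec, dotProduct_sub, sub_nonneg] at h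

variable [DecidableEq n]

theorem le_algebraMap_det_of_one_le {A : Matrix n n ℝ} (hA : 1 ≤ A) :
    A ≤ algebraMap ℝ _ A.det := by
  have hAh : A.IsHermitian := by simpa using (le_iff.mp hA).isHermitian.add isHermitian_one
  have hAs : IsSelfAdjoint A := hAh
  have one_le_eigenvalues : ∀ i, 1 ≤ hAh.eigenvalues i := fun i =>
    (CFC.one_le_iff A).mp hA _ (hAh.eigenvalues_mem_spectrum_real i)
  refine le_algebraMap_of_spectrum_le fun x hx => ?_
  obtain ⟨i, rfl⟩ := hAh.spectrum_real_eq_range_eigenvalues ▸ hx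
  rw [hAh.det_eq_prod_eigenvalues]
  exact Multiset.mem_le_prod_of_one_le one_le_eigenvalues (Finset.mem_univ_val i)

theorem le_det_div_det_smul_of_le {B C : Matrix n n ℝ} (hC : C.PosDef) (hCB : C ≤ B) :
    B ≤ (B.det / C.det) • C := by
  set S := CFC.sqrt C
  have hS : IsSelfAdjoint S := (CFC.sqrt_nonneg C).isSelfAdjoint
  have hSS : S * S = C := CFC.sqrt_mul_sqrt_self C hC.posSemidef.nonneg
  have hSdet : IsUnit S.det :=
    (isUnit_iff_isUnit_det S).mp ((CFC.isUnit_sqrt_iff C hC.posSemidef.nonneg).mpr hC.isUnit)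
  set T := S⁻¹
  have hT : IsSelfAdjoint T := IsHermitian.inv hS
  have hTS : T * S = 1 := nonsing_inv_mul S hSdet
  have hST : S * T = 1 := mul_nonsing_inv S hSdet
  have one_le : 1 ≤ T * B * T :=
    calc (1 : Matrix n n ℝ) = (T * S) * (S * T) := by rw [hTS, hST, one_mul]
      _ = T * C * T := by rw [← hSS]; noncomm_ring
      _ ≤ T * B * T := hT.conjugate_le_conjugate hCB
  have hdet : (T * B * T).det = B.det / C.det := by
    rw [det_mul, det_mul, det_nonsing_inv, Ring.inverse_eq_inv, ← hSS, det_mul]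
    field_simp
  calc B = (S * T) * B * (T * S) := by rw [hST, hTS, one_mul, mul_one]
    _ = S * (T * B * T) * S := by noncomm_ring
    _ ≤ S * algebraMap ℝ _ (T * B * T).det * S :=
      hS.conjugate_le_conjugate (le_algebraMap_det_of_one_le one_le)
    _ = (B.det / C.det) • C := by
      rw [hdet, Algebra.algebraMap_eq_smul_one, mul_smul_comm, smul_mul_assoc, mul_one, hSS]

end Matrix

theorem quadratic_form_ratio_le_det_ratio_general
    (d : ℕ)
    (B C : Matrix (Fin d) (Fin d) ℝ)
    (hC : C.PosDef) (hBC : (B - C).PosSemidef) :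
    ∀ x : Fin d → ℝ, x ≠ 0 →
      (x ⬝ᵥ B.mulVec x) / (x ⬝ᵥ C.mulVec x) ≤ B.det / C.det := by
  intro x hx
  have hxCx : 0 < x ⬝ᵥ C *ᵥ x := by simpa using hC.dotProduct_mulVec_pos hx
  have hBle : B ≤ (B.det / C.det) • C := le_det_div_det_smul_of_le hC (le_iff.mpr hBC)
  rw [div_le_iff₀ hxCx]
  simpa [smul_mulVec, dotProduct_smul] using star_dotProduct_mulVec_le_of_le hBle x

/-- For real symmetric `d × d` matrices `B ⪰ C ≻ 0`, every nonzero `x`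
satisfies `(xᵀ B x)/(xᵀ C x) ≤ det B / det C`. -/
theorem quadratic_form_ratio_le_det_ratio
    (d : ℕ) (hd : 1 ≤ d)
    (B C : Matrix (Fin d) (Fin d) ℝ)
    (hBsymm : B.IsSymm) (hCsymm : C.IsSymm)
    (hC : C.PosDef) (hBC : (B - C).PosSemidef) :
    ∀ x : Fin d → ℝ, x ≠ 0 →
      (x ⬝ᵥ B.mulVec x) / (x ⬝ᵥ C.mulVec x) ≤ B.det / C.det :=
  quadratic_form_ratio_le_det_ratio_general d B C hC hBC
end

section
/- Let x_1, …, x_M ∈ ℝ^d satisfy ‖x_q‖₂ ≤ L for all q ∈ [M], and let λ > 0. Define D_{M+1} := λ I + ∑_{q=1}^{M} x_q x_qᵀ, where I is the d×d identity matrix. Then log( det(D_{M+1}) / det(λ I) ) ≤ d · log( 1 + M L² / (λ d) ). -/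
/-!
All eigenvalues of `D = λ I + ∑ x_q x_qᵀ` are positive, so AM-GM on them gives
`det D ≤ (tr D / d)^d`, and `tr D = λ d + ∑ ‖x_q‖² ≤ λ d + M L²`. Dividing by `det (λ I) = λ^d`
and taking logarithms gives the bound.
-/

open Matrix Finset

theorem Real.prod_le_sum_div_card_pow {ι : Type*} (s : Finset ι) (z : ι → ℝ)
    (hz : ∀ i ∈ s, 0 ≤ z i) : ∏ i ∈ s, z i ≤ ((∑ i ∈ s, z i) / #s) ^ #s := by
  rcases s.eq_empty_or_nonempty with rfl | hs
  · simp
  have hcard : (0 : ℝ) < #s := by exact_mod_cast hs.card_pos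
  have amgm := Real.geom_mean_le_arith_mean s (fun _ => 1) z (by simp) (by simpa using hcard) hz
  simp only [Real.rpow_one, sum_const, nsmul_eq_mul, mul_one, one_mul] at amgm
  calc ∏ i ∈ s, z i = ((∏ i ∈ s, z i) ^ ((#s : ℝ))⁻¹) ^ #s := by
        rw [← Real.rpow_natCast, ← Real.rpow_mul (prod_nonneg hz), inv_mul_cancel₀ hcard.ne',
          Real.rpow_one]
    _ ≤ ((∑ i ∈ s, z i) / #s) ^ #s := by gcongr; exact Real.rpow_nonneg (prod_nonneg hz) _

theorem Matrix.PosSemidef.det_le_trace_div_card_pow {n : Type*} [Fintype n] [DecidableEq n]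
    {A : Matrix n n ℝ} (hA : A.PosSemidef) :
    A.det ≤ (A.trace / Fintype.card n) ^ Fintype.card n := by
  have hdet : A.det = ∏ i, hA.isHermitian.eigenvalues i := by
    simpa using hA.isHermitian.det_eq_prod_eigenvalues
  have htr : A.trace = ∑ i, hA.isHermitian.eigenvalues i := by
    simpa using hA.isHermitian.trace_eq_sum_eigenvalues
  rw [hdet, htr]
  exact Real.prod_le_sum_div_card_pow _ _ fun i _ => hA.eigenvalues_nonneg i

theorem Matrix.trace_smul_one_add_sum_vecMulVec_le {n ι : Type*} [Fintype n] [DecidableEq n]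
    [Fintype ι] (lam L : ℝ) (x : ι → n → ℝ) (hx : ∀ q, Real.sqrt (x q ⬝ᵥ x q) ≤ L) :
    (lam • (1 : Matrix n n ℝ) + ∑ q, vecMulVec (x q) (x q)).trace
      ≤ lam * Fintype.card n + Fintype.card ι * L ^ 2 := by
  simp only [trace_add, trace_smul, trace_one, trace_sum, trace_vecMulVec, smul_eq_mul]
  gcongr
  simpa using sum_le_sum fun q (_ : q ∈ univ) => (Real.sqrt_le_iff.mp (hx q)).2

/-- determinant lemma, log-det bound. If `‖x_q‖₂ ≤ L` for `q ∈ [M]` and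
`λ > 0`, then with `D_{M+1} = λ I + ∑_q x_q x_qᵀ`,
`log(det D_{M+1} / det (λ I)) ≤ d log(1 + M L² / (λ d))`. -/
theorem log_det_ratio_le
    (d M : ℕ) (L lam : ℝ) (hlam : 0 < lam)
    (x : Fin M → Fin d → ℝ)
    (hx : ∀ q : Fin M, Real.sqrt (x q ⬝ᵥ x q) ≤ L) :
    Real.log
        ((lam • (1 : Matrix (Fin d) (Fin d) ℝ) + ∑ q : Fin M, vecMulVec (x q) (x q)).det
          / (lam • (1 : Matrix (Fin d) (Fin d) ℝ)).det)
      ≤ d * Real.log (1 + M * L ^ 2 / (lam * d)) := by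
  rcases Nat.eq_zero_or_pos d with rfl | hd
  · simp
  set D := lam • (1 : Matrix (Fin d) (Fin d) ℝ) + ∑ q : Fin M, vecMulVec (x q) (x q)
  have hD : D.PosDef := (PosDef.smul PosDef.one hlam).add_posSemidef
    (posSemidef_sum _ fun q _ => by simpa using posSemidef_vecMulVec_self_star (x q))
  have htr := trace_smul_one_add_sum_vecMulVec_le lam L x hx
  simp only [Fintype.card_fin] at htr
  have hdet : D.det ≤ (lam * (1 + M * L ^ 2 / (lam * d))) ^ d := by
    refine (hD.posSemidef.det_le_trace_div_card_pow).trans ?_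
    rw [Fintype.card_fin]
    gcongr
    · exact div_nonneg hD.posSemidef.trace_nonneg (Nat.cast_nonneg d)
    · rw [div_le_iff₀ (by positivity)]
      field_simp
      linarith
  rw [det_smul, det_one, mul_one, Fintype.card_fin, ← Real.log_pow]
  refine Real.log_le_log (div_pos hD.det_pos (by positivity)) ?_
  rwa [div_le_iff₀ (by positivity), ← mul_pow, mul_comm _ lam]
end

section
/- Let x_1, …, x_M ∈ ℝ^d satisfy ‖x_q‖₂ ≤ L for all q ∈ [M], and let λ > 0. Define D_1 := λ I and, for ℓ = 2, …, M+1, D_ℓ := λ I + ∑_{q=1}^{ℓ−1} x_q x_qᵀ (each D_ℓ is positive definite). Then for every b > 0, ∑_{q=1}^{M} min{ b, ‖x_q‖²_{D_q^{-1}} } ≤ (1 + b) · d · log( 1 + M L² / (λ d) ). -/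
/-! The matrix determinant lemma gives `det D_{q+1} = det D_q * (1 + ‖x_q‖²_{D_q⁻¹})`, so the
sum of `log (1 + ‖x_q‖²_{D_q⁻¹})` telescopes to `log det D_{M+1} - d log λ`. By AM-GM on the
eigenvalues, `log det D_{M+1} ≤ d log (tr D_{M+1} / d) ≤ d log (λ + M L² / d)`. Finally
`min b w ≤ (1 + b) log (1 + w)` for `w ≥ 0`, since `t ≤ (1 + t) log (1 + t)` for `t ≥ 0`. -/

open Matrix Finset

theorem min_le_one_add_mul_log_one_add {b w : ℝ} (hb : 0 ≤ b) (hw : 0 ≤ w) :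
    min b w ≤ (1 + b) * Real.log (1 + w) := by
  have hm : 0 ≤ min b w := le_min hb hw
  calc min b w = (1 + min b w) - 1 := by ring
    _ ≤ (1 + min b w) * Real.log (1 + min b w) := Real.self_sub_one_le_mul_log (by linarith)
    _ ≤ (1 + b) * Real.log (1 + w) := by
      gcongr
      · exact Real.log_nonneg (by linarith)
      · exact min_le_left b w
      · exact min_le_right b w

namespace Matrix

variable {n : Type*} [Fintype n] [DecidableEq n]

theorem det_add_vecMulVec {R : Type*} [CommRing R] {A : Matrix n n R} (hA : IsUnit A.det)
    (u v : n → R) : (A + vecMulVec u v).det = A.det * (1 + v ⬝ᵥ A⁻¹ *ᵥ u) := by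
  rw [vecMulVec_eq Unit, det_add_replicateCol_mul_replicateRow hA, Matrix.mul_assoc,
    ← replicateCol_mulVec]
  simp [det_unique, replicateRow_mul_replicateCol_apply]

theorem PosDef.log_det_le {A : Matrix n n ℝ} (hA : A.PosDef) :
    Real.log A.det ≤ Fintype.card n * Real.log (A.trace / Fintype.card n) := by
  rcases isEmpty_or_nonempty n with hn | hn
  · simp
  have hd : (0 : ℝ) < Fintype.card n := by positivity
  have jensen := strictConcaveOn_log_Ioi.concaveOn.le_map_sum (t := univ)
    (w := fun _ => (Fintype.card n : ℝ)⁻¹) (p := hA.1.eigenvalues) (fun _ _ => by positivity)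
    (by simp [card_univ, hd.ne']) (fun i _ => hA.eigenvalues_pos i)
  simp only [smul_eq_mul, ← mul_sum] at jensen
  rw [hA.1.det_eq_prod_eigenvalues, hA.1.trace_eq_sum_eigenvalues]
  simp only [RCLike.ofReal_real_eq_id, id_eq]
  rw [Real.log_prod fun i _ => (hA.eigenvalues_pos i).ne', div_eq_inv_mul]
  calc ∑ i, Real.log (hA.1.eigenvalues i)
      = Fintype.card n * ((Fintype.card n : ℝ)⁻¹ * ∑ i, Real.log (hA.1.eigenvalues i)) := by
        field_simp
    _ ≤ _ := by gcongr

end Matrix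

theorem Fin.filter_val_lt_add_one {M k : ℕ} (hk : k < M) :
    univ.filter (fun q : Fin M => q.val < k + 1) =
      insert ⟨k, hk⟩ (univ.filter fun q : Fin M => q.val < k) := by
  ext q
  simp only [mem_filter, mem_univ, true_and, mem_insert, Fin.ext_iff]
  omega

section regularizedGram

variable {n : Type*} [DecidableEq n] {M : ℕ}

/-- `regularizedGram lam x k` is the paper's `D_{k+1}`: it sums over the first `k` vectors. -/
noncomputable def regularizedGram (lam : ℝ) (x : Fin M → n → ℝ) (k : ℕ) : Matrix n n ℝ :=
  lam • 1 + ∑ q : Fin M with q.val < k, vecMulVec (x q) (x q)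

variable {lam : ℝ} (x : Fin M → n → ℝ)

theorem regularizedGram_succ {k : ℕ} (hk : k < M) :
    regularizedGram lam x (k + 1) =
      regularizedGram lam x k + vecMulVec (x ⟨k, hk⟩) (x ⟨k, hk⟩) := by
  rw [regularizedGram, regularizedGram, Fin.filter_val_lt_add_one hk, sum_insert (by simp),
    add_assoc, add_comm (vecMulVec _ _)]

variable [Fintype n]

theorem posDef_regularizedGram (hlam : 0 < lam) (k : ℕ) : (regularizedGram lam x k).PosDef :=
  (PosDef.one.smul hlam).add_posSemidef <|
    posSemidef_sum _ fun q _ => by simpa using posSemidef_vecMulVec_self_star (x q)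

theorem dotProduct_inv_regularizedGram_mulVec_nonneg (hlam : 0 < lam) (k : ℕ) (v : n → ℝ) :
    0 ≤ v ⬝ᵥ (regularizedGram lam x k)⁻¹ *ᵥ v := by
  simpa using (posDef_regularizedGram x hlam k).posSemidef.inv.dotProduct_mulVec_nonneg v

theorem det_regularizedGram (hlam : 0 < lam) {k : ℕ} (hk : k ≤ M) :
    (regularizedGram lam x k).det = lam ^ Fintype.card n *
      ∏ q : Fin M with q.val < k, (1 + x q ⬝ᵥ (regularizedGram lam x q)⁻¹ *ᵥ x q) := by
  induction k with
  | zero => simp [regularizedGram]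
  | succ k ih =>
    rw [regularizedGram_succ x hk, det_add_vecMulVec
        ((isUnit_iff_isUnit_det _).mp (posDef_regularizedGram x hlam k).isUnit),
      ih (by omega), Fin.filter_val_lt_add_one hk, prod_insert (by simp)]
    ring

theorem trace_regularizedGram (k : ℕ) :
    (regularizedGram lam x k).trace =
      lam * Fintype.card n + ∑ q : Fin M with q.val < k, x q ⬝ᵥ x q := by
  simp [regularizedGram, trace_sum, trace_vecMulVec]

theorem sum_log_one_add_inv_regularizedGram_le (hlam : 0 < lam) :
    ∑ q, Real.log (1 + x q ⬝ᵥ (regularizedGram lam x q)⁻¹ *ᵥ x q) ≤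
      Fintype.card n * Real.log (1 + (∑ q, x q ⬝ᵥ x q) / (lam * Fintype.card n)) := by
  have hfull : (univ.filter fun q : Fin M => q.val < M) = univ :=
    filter_true_of_mem fun q _ => q.2
  have hdet := det_regularizedGram x hlam le_rfl
  have htrace := trace_regularizedGram (lam := lam) x M
  rw [hfull] at hdet htrace
  have hpos q : 0 < 1 + x q ⬝ᵥ (regularizedGram lam x q)⁻¹ *ᵥ x q := by
    linarith [dotProduct_inv_regularizedGram_mulVec_nonneg x hlam q (x q)]
  have hlog_det : Real.log (regularizedGram lam x M).det = Fintype.card n * Real.log lam +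
      ∑ q, Real.log (1 + x q ⬝ᵥ (regularizedGram lam x q)⁻¹ *ᵥ x q) := by
    rw [hdet, Real.log_mul (by positivity) (prod_pos fun q _ => hpos q).ne', Real.log_pow,
      Real.log_prod fun q _ => (hpos q).ne']
  have hlog_trace :
      Fintype.card n * Real.log ((regularizedGram lam x M).trace / Fintype.card n) =
        Fintype.card n * Real.log lam +
          Fintype.card n * Real.log (1 + (∑ q, x q ⬝ᵥ x q) / (lam * Fintype.card n)) := by
    rcases isEmpty_or_nonempty n with hn | hn
    · simp
    have hS : 0 ≤ ∑ q, x q ⬝ᵥ x q := sum_nonneg fun q _ => dotProduct_self_star_nonneg (x q)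
    rw [htrace, ← mul_add, ← Real.log_mul hlam.ne' (by positivity)]
    congr 2
    field_simp
  linarith [(posDef_regularizedGram x hlam M).log_det_le]

end regularizedGram

/-- determinant lemma, elliptical potential bound. If `‖x_q‖₂ ≤ L` for
`q ∈ [M]`, `λ > 0`, and `D_q = λ I + ∑_{q' < q} x_{q'} x_{q'}ᵀ`, then for every `b > 0`,
`∑_q min(b, ‖x_q‖²_{D_q⁻¹}) ≤ (1 + b) d log(1 + M L² / (λ d))`. -/
theorem sum_min_norm_sq_le
    (d M : ℕ) (L lam b : ℝ) (hlam : 0 < lam) (hb : 0 < b)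
    (x : Fin M → Fin d → ℝ)
    (hx : ∀ q : Fin M, Real.sqrt (x q ⬝ᵥ x q) ≤ L) :
    ∑ q : Fin M,
        min b
          (x q ⬝ᵥ
            ((lam • (1 : Matrix (Fin d) (Fin d) ℝ) +
                ∑ q' ∈ Finset.univ.filter (fun q' : Fin M => q' < q),
                  vecMulVec (x q') (x q'))⁻¹).mulVec (x q))
      ≤ (1 + b) * d * Real.log (1 + M * L ^ 2 / (lam * d)) := by
  have hnorm q : x q ⬝ᵥ x q ≤ L ^ 2 := (Real.sqrt_le_iff.mp (hx q)).2
  have hS_nonneg : 0 ≤ ∑ q, x q ⬝ᵥ x q :=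
    sum_nonneg fun q _ => dotProduct_self_star_nonneg (x q)
  have hS : ∑ q, x q ⬝ᵥ x q ≤ M * L ^ 2 := by
    simpa using sum_le_sum (s := univ) fun q _ => hnorm q
  have hpotential := sum_log_one_add_inv_regularizedGram_le x hlam
  rw [Fintype.card_fin] at hpotential
  calc ∑ q, min b (x q ⬝ᵥ (regularizedGram lam x q)⁻¹ *ᵥ x q)
      ≤ ∑ q, (1 + b) * Real.log (1 + x q ⬝ᵥ (regularizedGram lam x q)⁻¹ *ᵥ x q) :=
        sum_le_sum fun q _ => min_le_one_add_mul_log_one_add hb.le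
          (dotProduct_inv_regularizedGram_mulVec_nonneg x hlam q (x q))
    _ = (1 + b) * ∑ q, Real.log (1 + x q ⬝ᵥ (regularizedGram lam x q)⁻¹ *ᵥ x q) :=
        (mul_sum ..).symm
    _ ≤ (1 + b) * (d * Real.log (1 + (∑ q, x q ⬝ᵥ x q) / (lam * d))) := by gcongr
    _ ≤ (1 + b) * d * Real.log (1 + M * L ^ 2 / (lam * d)) := by
      rw [← mul_assoc]
      gcongr
end

section
/- Fix N, H ∈ ℕ, λ > 0, L > 0 and d̃ ∈ ℕ. Let x_{n,h} ∈ ℝ^{d̃} for n ∈ [N], h ∈ [H] satisfy ‖x_{n,h}‖₂ ≤ L, and let D_{n,h} ∈ ℝ^{d̃×d̃} be symmetric matrices for n ∈ [N], h ∈ [H] such that λI ⪯ D_{n,h} for all (n,h), and D_{n,h} ⪯ D_{n',h'} whenever (n,h) ≤ (n',h') in the lexicographic order (i.e. n < n', or n = n' and h ≤ h'). Define D_1 := λI and D_n := D_{n−1, H} for 2 ≤ n ≤ N+1. Then ∑_{n=1}^{N} ∑_{h=1}^{H} ‖x_{n,h}‖_{D_n^{-1}} ≤ 2 ∑_{n=1}^{N}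 ∑_{h=1}^{H} ‖x_{n,h}‖_{D_{n,h}^{-1}} + (2HL/√λ) · log( det(D_{N+1}) / det(λI) ). -/
/-!
Call episode `n` *doubling* if `det D_{n+1} > 2 det D_n`. The `D_n` increase in the Loewner
order, hence so do their determinants, and telescoping `log det D_n` shows that there are at most
`log₂ (det D_{N+1} / det (λ I)) ≤ 2 log (det D_{N+1} / det (λ I))` doubling episodes; on these
each term is at most `L / √λ` because `λ I ⪯ D_n`. On any other episode
`D_n ⪯ D_{n,h} ⪯ D_{n+1}` gives `det D_{n,h} ≤ 2 det D_n`, and for `A ⪯ B` one has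
`xᵀ A⁻¹ x ≤ (det B / det A) xᵀ B⁻¹ x`: with `S = √B` the matrix `S A⁻¹ S` dominates `I`, so its
largest eigenvalue is at most its determinant `det B / det A`.
-/

open Matrix Finset

/-- The "episode-start" matrices: `D_1 = λ I` (index `0` here) and, for `n ≥ 1` (representing
the paper's episode `n+1`), `D_{n+1} = D_{n, H}`, i.e. `D (n-1) (H-1)` in `0`-indexed form. -/
noncomputable def episodeMatrix (dt H : ℕ) (lam : ℝ)
    (D : ℕ → ℕ → Matrix (Fin dt) (Fin dt) ℝ) : ℕ → Matrix (Fin dt) (Fin dt) ℝ :=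
  fun n => if n = 0 then lam • (1 : Matrix (Fin dt) (Fin dt) ℝ) else D (n - 1) (H - 1)

namespace Matrix

open scoped MatrixOrder

variable {n : Type*} {A B M : Matrix n n ℝ}

lemma PosDef.of_le (hA : A.PosDef) (h : A ≤ B) : B.PosDef := by
  simpa using hA.add_posSemidef (le_iff.mp h)

lemma isHermitian_of_one_le [DecidableEq n] (h : 1 ≤ M) : M.IsHermitian := by
  simpa using (le_iff.mp h).isHermitian.add isHermitian_one

lemma posDef_of_smul_one_le [DecidableEq n] {lam : ℝ} (hlam : 0 < lam) (h : lam • 1 ≤ A) :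
    A.PosDef :=
  (PosDef.one.smul hlam).of_le h

variable [Fintype n]

lemma dotProduct_mulVec_le_of_le (h : A ≤ B) (x : n → ℝ) :
    x ⬝ᵥ A *ᵥ x ≤ x ⬝ᵥ B *ᵥ x := by
  have := (le_iff.mp h).dotProduct_mulVec_nonneg x
  rwa [star_trivial, sub_mulVec, dotProduct_sub, sub_nonneg] at this

lemma IsHermitian.dotProduct_mulVec_comm (hA : A.IsHermitian) (x y : n → ℝ) :
    x ⬝ᵥ A *ᵥ y = y ⬝ᵥ A *ᵥ x := by
  rw [← dotProduct_transpose_mulVec, ← conjTranspose_eq_transpose_of_trivial, hA.eq]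

lemma dotProduct_mulVec_mulVec_conj (S C : Matrix n n ℝ) (y : n → ℝ) :
    (S *ᵥ y) ⬝ᵥ C *ᵥ (S *ᵥ y) = y ⬝ᵥ (Sᵀ * C * S) *ᵥ y := by
  rw [← mulVec_mulVec, ← mulVec_mulVec, dotProduct_transpose_mulVec, dotProduct_comm]

variable [DecidableEq n]

lemma PosDef.mulVec_inv_mulVec (hA : A.PosDef) (x : n → ℝ) : A *ᵥ (A⁻¹ *ᵥ x) = x := by
  rw [mulVec_mulVec, mul_nonsing_inv _ ((isUnit_iff_isUnit_det A).mp hA.isUnit), one_mulVec]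

lemma two_mul_dotProduct_sub_le (hA : A.PosDef) (x y : n → ℝ) :
    2 * (x ⬝ᵥ y) - y ⬝ᵥ A *ᵥ y ≤ x ⬝ᵥ A⁻¹ *ᵥ x := by
  have h := hA.posSemidef.dotProduct_mulVec_nonneg (y - A⁻¹ *ᵥ x)
  rw [star_trivial, mulVec_sub, dotProduct_sub, sub_dotProduct, sub_dotProduct,
    hA.isHermitian.dotProduct_mulVec_comm (A⁻¹ *ᵥ x) y, hA.mulVec_inv_mulVec,
    dotProduct_comm y x] at h
  linarith [dotProduct_comm (A⁻¹ *ᵥ x) x]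

lemma inv_le_inv_of_le (hA : A.PosDef) (h : A ≤ B) : B⁻¹ ≤ A⁻¹ := by
  have hB := hA.of_le h
  refine le_iff.mpr (.of_dotProduct_mulVec_nonneg (hA.inv.isHermitian.sub hB.inv.isHermitian)
    fun x => ?_)
  rw [star_trivial, sub_mulVec, dotProduct_sub, sub_nonneg]
  have hvar := two_mul_dotProduct_sub_le hA x (B⁻¹ *ᵥ x)
  have hle := dotProduct_mulVec_le_of_le h (B⁻¹ *ᵥ x)
  rw [hB.mulVec_inv_mulVec] at hle
  linarith [dotProduct_comm x (B⁻¹ *ᵥ x)]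

lemma IsHermitian.one_le_eigenvalues (hM : M.IsHermitian) (h : 1 ≤ M) (i : n) :
    1 ≤ hM.eigenvalues i :=
  (algebraMap_le_iff_le_spectrum hM.isSelfAdjoint).mp (by rwa [map_one]) _
    (hM.eigenvalues_mem_spectrum_real i)

lemma one_le_det_of_one_le (h : 1 ≤ M) : 1 ≤ M.det := by
  have hM := isHermitian_of_one_le h
  rw [hM.det_eq_prod_eigenvalues]
  exact_mod_cast one_le_prod fun i _ => hM.one_le_eigenvalues h i

lemma le_det_smul_one_of_one_le (h : 1 ≤ M) : M ≤ M.det • 1 := by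
  have hM := isHermitian_of_one_le h
  rw [← Algebra.algebraMap_eq_smul_one]
  refine le_algebraMap_of_spectrum_le (fun r hr => ?_) hM.isSelfAdjoint
  obtain ⟨i, rfl⟩ := hM.spectrum_real_eq_range_eigenvalues ▸ hr
  rw [hM.det_eq_prod_eigenvalues]
  simpa using prod_le_prod_of_subset_of_one_le (s := {i}) (subset_univ _)
    (by simpa using (zero_le_one.trans (hM.one_le_eigenvalues h i)))
    (fun j _ _ => hM.one_le_eigenvalues h j)

lemma dotProduct_smul_one_mulVec (c : ℝ) (y : n → ℝ) :
    y ⬝ᵥ (c • 1 : Matrix n n ℝ) *ᵥ y = c * (y ⬝ᵥ y) := by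
  rw [smul_mulVec, one_mulVec, dotProduct_smul, smul_eq_mul]

lemma transpose_sqrt (B : Matrix n n ℝ) : (CFC.sqrt B)ᵀ = CFC.sqrt B := by
  rw [← conjTranspose_eq_transpose_of_trivial]
  exact (nonneg_iff_posSemidef.mp (CFC.sqrt_nonneg B)).isHermitian.eq

lemma sqrt_mul_inv_mul_sqrt_eq_one (hB : B.PosDef) : CFC.sqrt B * B⁻¹ * CFC.sqrt B = 1 := by
  rw [mul_eq_one_comm, ← Matrix.mul_assoc, CFC.sqrt_mul_sqrt_self B hB.posSemidef.nonneg,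
    mul_nonsing_inv _ ((isUnit_iff_isUnit_det B).mp hB.isUnit)]

lemma one_le_sqrt_mul_inv_mul_sqrt (hA : A.PosDef) (h : A ≤ B) :
    1 ≤ CFC.sqrt B * A⁻¹ * CFC.sqrt B := by
  rw [← sqrt_mul_inv_mul_sqrt_eq_one (hA.of_le h)]
  exact (IsSelfAdjoint.of_nonneg (CFC.sqrt_nonneg B)).conjugate_le_conjugate
    (inv_le_inv_of_le hA h)

lemma det_sqrt_mul_inv_mul_sqrt (hB : 0 ≤ B) :
    (CFC.sqrt B * A⁻¹ * CFC.sqrt B).det = B.det / A.det := by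
  have hdet : (CFC.sqrt B).det * (CFC.sqrt B).det = B.det := by
    rw [← det_mul, CFC.sqrt_mul_sqrt_self B hB]
  rw [det_mul, det_mul, det_nonsing_inv, Ring.inverse_eq_inv', ← hdet]
  ring

lemma det_le_det_of_le (hA : A.PosDef) (h : A ≤ B) : A.det ≤ B.det := by
  have := one_le_det_of_one_le (one_le_sqrt_mul_inv_mul_sqrt hA h)
  rwa [det_sqrt_mul_inv_mul_sqrt (hA.of_le h).posSemidef.nonneg, one_le_div hA.det_pos] at this

lemma dotProduct_inv_mulVec_le (hA : A.PosDef) (h : A ≤ B) (x : n → ℝ) :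
    x ⬝ᵥ A⁻¹ *ᵥ x ≤ B.det / A.det * (x ⬝ᵥ B⁻¹ *ᵥ x) := by
  have hB := hA.of_le h
  set S := CFC.sqrt B
  obtain ⟨y, rfl⟩ : ∃ y, S *ᵥ y = x :=
    ⟨(B⁻¹ * S) *ᵥ x, by
      rw [mulVec_mulVec, ← Matrix.mul_assoc, sqrt_mul_inv_mul_sqrt_eq_one hB, one_mulVec]⟩
  have hM := one_le_sqrt_mul_inv_mul_sqrt hA h
  rw [dotProduct_mulVec_mulVec_conj, dotProduct_mulVec_mulVec_conj, transpose_sqrt,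
    sqrt_mul_inv_mul_sqrt_eq_one hB, one_mulVec,
    ← det_sqrt_mul_inv_mul_sqrt hB.posSemidef.nonneg, ← dotProduct_smul_one_mulVec]
  exact dotProduct_mulVec_le_of_le (le_det_smul_one_of_one_le hM) y

lemma dotProduct_inv_mulVec_le_of_smul_one_le {lam : ℝ} (hlam : 0 < lam) (h : lam • 1 ≤ A)
    (x : n → ℝ) : x ⬝ᵥ A⁻¹ *ᵥ x ≤ (x ⬝ᵥ x) / lam := by
  have hinv : (lam • 1 : Matrix n n ℝ)⁻¹ = lam⁻¹ • 1 :=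
    inv_eq_left_inv (by simp [smul_smul, hlam.ne'])
  have := dotProduct_mulVec_le_of_le (inv_le_inv_of_le (PosDef.one.smul hlam) h) x
  rwa [hinv, dotProduct_smul_one_mulVec, inv_mul_eq_div] at this

end Matrix

open scoped MatrixOrder

section SqrtBounds

variable {n : Type*} [Fintype n] [DecidableEq n] {A B : Matrix n n ℝ}

lemma sqrt_dotProduct_inv_mulVec_le_two_mul (hA : A.PosDef) (h : A ≤ B)
    (hdet : B.det ≤ 2 * A.det) (x : n → ℝ) :
    √(x ⬝ᵥ A⁻¹ *ᵥ x) ≤ 2 * √(x ⬝ᵥ B⁻¹ *ᵥ x) := by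
  have hqB : 0 ≤ x ⬝ᵥ B⁻¹ *ᵥ x := by
    simpa using (hA.of_le h).inv.posSemidef.dotProduct_mulVec_nonneg x
  have hratio : B.det / A.det ≤ 2 := (div_le_iff₀ hA.det_pos).mpr (by linarith)
  calc √(x ⬝ᵥ A⁻¹ *ᵥ x) ≤ √(2 ^ 2 * (x ⬝ᵥ B⁻¹ *ᵥ x)) := by
        gcongr
        nlinarith [dotProduct_inv_mulVec_le hA h x, mul_le_mul_of_nonneg_right hratio hqB]
    _ = 2 * √(x ⬝ᵥ B⁻¹ *ᵥ x) := by
        rw [Real.sqrt_mul (by positivity), Real.sqrt_sq zero_le_two]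

lemma sqrt_dotProduct_inv_mulVec_le_of_smul_one_le {lam L : ℝ} (hlam : 0 < lam)
    (h : lam • 1 ≤ A) {x : n → ℝ} (hx : √(x ⬝ᵥ x) ≤ L) :
    √(x ⬝ᵥ A⁻¹ *ᵥ x) ≤ L / √lam :=
  calc √(x ⬝ᵥ A⁻¹ *ᵥ x) ≤ √((x ⬝ᵥ x) / lam) :=
        Real.sqrt_le_sqrt (dotProduct_inv_mulVec_le_of_smul_one_le hlam h x)
    _ = √(x ⬝ᵥ x) / √lam := Real.sqrt_div' _ hlam.le
    _ ≤ L / √lam := by gcongr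

end SqrtBounds

lemma card_filter_two_mul_lt_le {f : ℕ → ℝ} {N : ℕ} (hpos : ∀ n ≤ N, 0 < f n)
    (hmono : ∀ n < N, f n ≤ f (n + 1)) :
    (#{n ∈ range N | 2 * f n < f (n + 1)} : ℝ) ≤ 2 * Real.log (f N / f 0) := by
  set g := fun n => Real.log (f n)
  have hstep : ∀ n < N, 0 ≤ g (n + 1) - g n := fun n hn =>
    sub_nonneg.mpr (Real.log_le_log (hpos n hn.le) (hmono n hn))
  have hdouble : ∀ n ∈ range N, 2 * f n < f (n + 1) → Real.log 2 ≤ g (n + 1) - g n := by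
    intro n hn hlt
    have hfn := hpos n (mem_range.mp hn).le
    have := Real.log_le_log (by positivity) hlt.le
    rw [Real.log_mul two_ne_zero hfn.ne'] at this
    linarith
  have hcount :
      (#{n ∈ range N | 2 * f n < f (n + 1)} : ℝ) * Real.log 2 ≤ Real.log (f N / f 0) :=
    calc (#{n ∈ range N | 2 * f n < f (n + 1)} : ℝ) * Real.log 2
        ≤ ∑ n ∈ range N with 2 * f n < f (n + 1), (g (n + 1) - g n) := by
          rw [← nsmul_eq_mul]
          exact card_nsmul_le_sum _ _ _ fun n hn =>
            hdouble n (mem_filter.mp hn).1 (mem_filter.mp hn).2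
      _ ≤ ∑ n ∈ range N, (g (n + 1) - g n) :=
          sum_le_sum_of_subset_of_nonneg (filter_subset _ _) fun n hn _ =>
            hstep n (mem_range.mp hn)
      _ = Real.log (f N / f 0) := by
          rw [sum_range_sub, Real.log_div (hpos N le_rfl).ne' (hpos 0 N.zero_le).ne']
  -- The factor `2` bounds `1 / log 2`.
  have hlog2 := Real.log_two_gt_d9
  nlinarith [Nat.cast_nonneg (α := ℝ) #{n ∈ range N | 2 * f n < f (n + 1)}]

lemma sum_sqrt_dotProduct_inv_mulVec_le {n : Type*} [Fintype n] [DecidableEq n] {H : ℕ}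
    {lam L : ℝ} (hlam : 0 < lam) {E E' : Matrix n n ℝ} {D : ℕ → Matrix n n ℝ}
    {x : ℕ → n → ℝ} (hE : lam • 1 ≤ E) (hED : ∀ h < H, E ≤ D h) (hDE : ∀ h < H, D h ≤ E')
    (hx : ∀ h < H, √(x h ⬝ᵥ x h) ≤ L) :
    ∑ h ∈ range H, √(x h ⬝ᵥ E⁻¹ *ᵥ x h)
      ≤ 2 * ∑ h ∈ range H, √(x h ⬝ᵥ (D h)⁻¹ *ᵥ x h)
        + if 2 * E.det < E'.det then H * (L / √lam) else 0 := by
  have hEpd := posDef_of_smul_one_le hlam hE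
  split_ifs with hdouble
  · have hnonneg : 0 ≤ ∑ h ∈ range H, √(x h ⬝ᵥ (D h)⁻¹ *ᵥ x h) := by positivity
    calc ∑ h ∈ range H, √(x h ⬝ᵥ E⁻¹ *ᵥ x h) ≤ ∑ _h ∈ range H, L / √lam :=
          sum_le_sum fun h hh =>
            sqrt_dotProduct_inv_mulVec_le_of_smul_one_le hlam hE (hx h (mem_range.mp hh))
      _ ≤ _ := by rw [sum_const, card_range, nsmul_eq_mul]; linarith
  · rw [add_zero, mul_sum]
    refine sum_le_sum fun h hh => ?_
    have hh := mem_range.mp hh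
    have hdet : (D h).det ≤ 2 * E.det :=
      (det_le_det_of_le (hEpd.of_le (hED h hh)) (hDE h hh)).trans (not_lt.mp hdouble)
    exact sqrt_dotProduct_inv_mulVec_le_two_mul hEpd (hED h hh) hdet _

section EpisodeMatrix

variable {N H dt : ℕ} {lam : ℝ} {D : ℕ → ℕ → Matrix (Fin dt) (Fin dt) ℝ}

lemma episodeMatrix_zero : episodeMatrix dt H lam D 0 = lam • 1 := rfl

lemma smul_one_le_episodeMatrix (hH : 0 < H)
    (hlow : ∀ n h, n < N → h < H → lam • 1 ≤ D n h) {n : ℕ} (hn : n ≤ N) :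
    lam • 1 ≤ episodeMatrix dt H lam D n := by
  cases n with
  | zero => exact le_rfl
  | succ m => exact hlow m (H - 1) hn (Nat.sub_lt hH one_pos)

lemma episodeMatrix_le (hlow : ∀ n h, n < N → h < H → lam • 1 ≤ D n h)
    (hmono : ∀ n h n' h', n < N → h < H → n' < N → h' < H →
      (n < n' ∨ (n = n' ∧ h ≤ h')) → D n h ≤ D n' h')
    {n h : ℕ} (hn : n < N) (hh : h < H) :
    episodeMatrix dt H lam D n ≤ D n h := by
  cases n with
  | zero => exact hlow 0 h hn hh
  | succ m =>
    exact hmono m (H - 1) (m + 1) h (by omega) (by omega) hn hh (.inl m.lt_succ_self)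

lemma le_episodeMatrix_succ
    (hmono : ∀ n h n' h', n < N → h < H → n' < N → h' < H →
      (n < n' ∨ (n = n' ∧ h ≤ h')) → D n h ≤ D n' h')
    {n h : ℕ} (hn : n < N) (hh : h < H) :
    D n h ≤ episodeMatrix dt H lam D (n + 1) :=
  hmono n h n (H - 1) hn hh hn (by omega) (.inr ⟨rfl, by omega⟩)

end EpisodeMatrix

theorem lazy_determinant_lemma_general
    (N H dt : ℕ) (hH : 0 < H) (lam L : ℝ) (hlam : 0 < lam) (hL : 0 < L)
    (x : ℕ → ℕ → Fin dt → ℝ)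
    (hx : ∀ n h, n < N → h < H → Real.sqrt (x n h ⬝ᵥ x n h) ≤ L)
    (D : ℕ → ℕ → Matrix (Fin dt) (Fin dt) ℝ)
    (hlow : ∀ n h, n < N → h < H →
      (D n h - lam • (1 : Matrix (Fin dt) (Fin dt) ℝ)).PosSemidef)
    (hmono : ∀ n h n' h', n < N → h < H → n' < N → h' < H →
      (n < n' ∨ (n = n' ∧ h ≤ h')) → (D n' h' - D n h).PosSemidef) :
    ∑ n ∈ Finset.range N, ∑ h ∈ Finset.range H,
        Real.sqrt (x n h ⬝ᵥ ((episodeMatrix dt H lam D n)⁻¹).mulVec (x n h))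
      ≤ 2 * ∑ n ∈ Finset.range N, ∑ h ∈ Finset.range H,
            Real.sqrt (x n h ⬝ᵥ ((D n h)⁻¹).mulVec (x n h))
        + (2 * H * L / Real.sqrt lam) *
            Real.log ((episodeMatrix dt H lam D N).det /
              (lam • (1 : Matrix (Fin dt) (Fin dt) ℝ)).det) := by
  set E := episodeMatrix dt H lam D
  have hE_lam : ∀ n ≤ N, lam • 1 ≤ E n := fun n => smul_one_le_episodeMatrix hH hlow
  have hE_det_pos : ∀ n ≤ N, 0 < (E n).det := fun n hn =>
    (posDef_of_smul_one_le hlam (hE_lam n hn)).det_pos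
  have hE_det_mono : ∀ n < N, (E n).det ≤ (E (n + 1)).det := fun n hn =>
    det_le_det_of_le (posDef_of_smul_one_le hlam (hE_lam n hn.le))
      ((episodeMatrix_le hlow hmono hn (Nat.sub_lt hH one_pos)).trans
        (le_episodeMatrix_succ hmono hn (Nat.sub_lt hH one_pos)))
  have hcard := card_filter_two_mul_lt_le hE_det_pos hE_det_mono
  calc _ ≤ ∑ n ∈ range N, (2 * ∑ h ∈ range H, √(x n h ⬝ᵥ (D n h)⁻¹ *ᵥ x n h)
          + if 2 * (E n).det < (E (n + 1)).det then H * (L / √lam) else 0) :=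
        sum_le_sum fun n hn => sum_sqrt_dotProduct_inv_mulVec_le hlam
          (hE_lam n (mem_range.mp hn).le)
          (fun _ => episodeMatrix_le hlow hmono (mem_range.mp hn))
          (fun _ => le_episodeMatrix_succ hmono (mem_range.mp hn))
          (fun h => hx n h (mem_range.mp hn))
    _ = 2 * ∑ n ∈ range N, ∑ h ∈ range H, √(x n h ⬝ᵥ (D n h)⁻¹ *ᵥ x n h)
          + #{n ∈ range N | 2 * (E n).det < (E (n + 1)).det} * (H * (L / √lam)) := by
        rw [sum_add_distrib, ← mul_sum, sum_ite, sum_const_zero, add_zero, sum_const,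
          nsmul_eq_mul]
    _ ≤ 2 * ∑ n ∈ range N, ∑ h ∈ range H, √(x n h ⬝ᵥ (D n h)⁻¹ *ᵥ x n h)
          + 2 * Real.log ((E N).det / (E 0).det) * (H * (L / √lam)) := by gcongr
    _ = _ := by rw [show E 0 = lam • 1 from episodeMatrix_zero]; ring

/-- lazy determinant lemma. Episodes `n ∈ [N]` and stages `h ∈ [H]` are
`0`-indexed: `x n h` and `D n h` for `n < N`, `h < H`. The matrices are symmetric, satisfy
`λ I ⪯ D_{n,h}`, and are monotone in the lexicographic order. Then
`∑_{n,h} ‖x_{n,h}‖_{D_n⁻¹} ≤ 2 ∑_{n,h} ‖x_{n,h}‖_{D_{n,h}⁻¹}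
  + (2HL/√λ) log(det D_{N+1} / det (λ I))`. -/
theorem lazy_determinant_lemma
    (N H dt : ℕ) (hH : 0 < H) (lam L : ℝ) (hlam : 0 < lam) (hL : 0 < L)
    (x : ℕ → ℕ → Fin dt → ℝ)
    (hx : ∀ n h, n < N → h < H → Real.sqrt (x n h ⬝ᵥ x n h) ≤ L)
    (D : ℕ → ℕ → Matrix (Fin dt) (Fin dt) ℝ)
    (hsymm : ∀ n h, n < N → h < H → (D n h).IsSymm)
    (hlow : ∀ n h, n < N → h < H →
      (D n h - lam • (1 : Matrix (Fin dt) (Fin dt) ℝ)).PosSemidef)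
    (hmono : ∀ n h n' h', n < N → h < H → n' < N → h' < H →
      (n < n' ∨ (n = n' ∧ h ≤ h')) → (D n' h' - D n h).PosSemidef) :
    ∑ n ∈ Finset.range N, ∑ h ∈ Finset.range H,
        Real.sqrt (x n h ⬝ᵥ ((episodeMatrix dt H lam D n)⁻¹).mulVec (x n h))
      ≤ 2 * ∑ n ∈ Finset.range N, ∑ h ∈ Finset.range H,
            Real.sqrt (x n h ⬝ᵥ ((D n h)⁻¹).mulVec (x n h))
        + (2 * H * L / Real.sqrt lam) *
            Real.log ((episodeMatrix dt H lam D N).det /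
              (lam • (1 : Matrix (Fin dt) (Fin dt) ℝ)).det) :=
  lazy_determinant_lemma_general N H dt hH lam L hlam hL x hx D hlow hmono
end

section
/- Let (Ω, ℱ, ℙ) be a probability space with a filtration (ℱ_t)_{t ≥ 0}, and let (X_t)_{t ≥ 1} be a martingale difference sequence with respect to this filtration (X_t is ℱ_t-measurable and 𝔼[X_t | ℱ_{t−1}] = 0 for all t) satisfying |X_t| ≤ ζ almost surely for some ζ > 0. Then for every δ ∈ (0,1], with probability at least 1 − δ, simultaneously for all integers N ≥ 2: ∑_{t=1}^{N} X_t ≤ 2 ζ √( N · ln( 6 ln N / δ ) ). -/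
/-!
For fixed `l` and `S_n = X_1 + ⋯ + X_n`, `exp (l S_n)` is a submartingale, because
`1 + l X ≤ exp (l X)` and `𝔼[X_{n+1} | ℱ_n] = 0`, and its mean is at most `exp (l² ζ² n / 2)` by
the conditional Hoeffding lemma (convexity of `exp` on `[-l ζ, l ζ]`). Doob's maximal inequality
with the optimal `l` gives `ℙ(max_{k ≤ n} S_k ≥ ε) ≤ exp (-ε² / (2 n ζ²))`.

Peeling: cover `N ≥ 11` by epochs `[n_j, n_{j+1})` with `n_{j+1} ≤ 3 n_j / 2`, and on epoch `j`
apply the maximal bound at the level `2 ζ √(n_j L(n_j))`, `L(N) = ln (6 ln N / δ)`. It fails with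
probability at most `exp (-4/3 · L(n_j)) ≤ δ (6 ln n_j)^(-4/3)`; since `6 ln n_j` grows at least
linearly in `j`, these probabilities add up to at most `δ`. For `2 ≤ N ≤ 10` the trivial bound
`S_N ≤ N ζ` already suffices.
-/

open MeasureTheory Real Finset Filter

section Increment

lemma Real.exp_mul_le_cosh_add_sinh_div_mul {l x ζ : ℝ} (hx : |x| ≤ ζ) :
    exp (l * x) ≤ cosh (l * ζ) + sinh (l * ζ) / ζ * x := by
  obtain ⟨hxl, hxu⟩ := abs_le.1 hx
  rcases (neg_le_self_iff.1 (hxl.trans hxu)).eq_or_lt with rfl | hζ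
  · obtain rfl : x = 0 := by linarith
    simp
  have hconv := convexOn_exp.2 (Set.mem_univ (-(l * ζ))) (Set.mem_univ (l * ζ))
    (div_nonneg (sub_nonneg.2 hxu) (by positivity) : 0 ≤ (ζ - x) / (2 * ζ))
    (div_nonneg (by linarith) (by positivity) : 0 ≤ (ζ + x) / (2 * ζ))
    (by field_simp; ring)
  simp only [smul_eq_mul] at hconv
  have hcomb : (ζ - x) / (2 * ζ) * -(l * ζ) + (ζ + x) / (2 * ζ) * (l * ζ) = l * x := by
    field_simp; ring
  rw [hcomb] at hconv
  refine hconv.trans_eq ?_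
  rw [cosh_eq, sinh_eq]
  field_simp
  ring

variable {Ω : Type*} {m m0 : MeasurableSpace Ω} {μ : Measure Ω} {Y : Ω → ℝ} {ζ : ℝ}

lemma integrable_exp_mul_of_abs_le [IsFiniteMeasure μ] (hY : AEStronglyMeasurable Y μ)
    (hYζ : ∀ᵐ ω ∂μ, |Y ω| ≤ ζ) (l : ℝ) : Integrable (fun ω => exp (l * Y ω)) μ := by
  refine .of_bound (continuous_exp.comp_aestronglyMeasurable (hY.const_mul l)) (exp (|l| * ζ)) ?_
  filter_upwards [hYζ] with ω hω
  rw [norm_eq_abs, abs_exp, exp_le_exp]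
  exact (le_abs_self _).trans (abs_mul l (Y ω) ▸ mul_le_mul_of_nonneg_left hω (abs_nonneg l))

lemma condExp_const_add_mul_ae_eq [IsFiniteMeasure μ] (hm : m ≤ m0) (hY : Integrable Y μ)
    (hY0 : μ[Y | m] =ᵐ[μ] 0) (a b : ℝ) :
    μ[fun ω => a + b * Y ω | m] =ᵐ[μ] fun _ => a := by
  have hsplit : (fun ω => a + b * Y ω) = (fun _ => a) + b • Y := rfl
  rw [hsplit]
  filter_upwards [condExp_add (integrable_const a) (hY.smul b) m, condExp_smul (m := m) b Y, hY0]
    with ω hadd hsmul h0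
  simp [hadd, hsmul, h0, condExp_const hm]

lemma one_le_condExp_exp_mul [IsFiniteMeasure μ] (hm : m ≤ m0) (hY : AEStronglyMeasurable Y μ)
    (hYζ : ∀ᵐ ω ∂μ, |Y ω| ≤ ζ) (hY0 : μ[Y | m] =ᵐ[μ] 0) (l : ℝ) :
    (fun _ => 1) ≤ᵐ[μ] μ[fun ω => exp (l * Y ω) | m] := by
  have hYint : Integrable Y μ := .of_bound hY ζ (by simpa only [norm_eq_abs] using hYζ)
  have hmono := condExp_mono (m := m) ((integrable_const 1).add (hYint.const_mul l))
    (integrable_exp_mul_of_abs_le hY hYζ l)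
    (ae_of_all μ fun ω => by simpa [add_comm] using add_one_le_exp (l * Y ω))
  filter_upwards [hmono, condExp_const_add_mul_ae_eq hm hYint hY0 1 l] with ω hω h1
  exact h1.symm.trans_le hω

lemma condExp_exp_mul_le [IsFiniteMeasure μ] (hm : m ≤ m0) (hY : AEStronglyMeasurable Y μ)
    (hYζ : ∀ᵐ ω ∂μ, |Y ω| ≤ ζ) (hY0 : μ[Y | m] =ᵐ[μ] 0) (l : ℝ) :
    μ[fun ω => exp (l * Y ω) | m] ≤ᵐ[μ] fun _ => exp (l ^ 2 * ζ ^ 2 / 2) := by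
  have hYint : Integrable Y μ := .of_bound hY ζ (by simpa only [norm_eq_abs] using hYζ)
  have hmono := condExp_mono (m := m) (integrable_exp_mul_of_abs_le hY hYζ l)
    ((integrable_const _).add (hYint.const_mul (sinh (l * ζ) / ζ)))
    (by filter_upwards [hYζ] with ω hω using exp_mul_le_cosh_add_sinh_div_mul hω)
  filter_upwards [hmono, condExp_const_add_mul_ae_eq hm hYint hY0 (cosh (l * ζ)) _]
    with ω hω hcosh
  calc _ ≤ _ := hω
    _ = cosh (l * ζ) := hcosh
    _ ≤ exp ((l * ζ) ^ 2 / 2) := cosh_le_exp_half_sq _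
    _ = exp (l ^ 2 * ζ ^ 2 / 2) := by ring_nf

end Increment

lemma MeasureTheory.ofReal_one_sub_le_measure {Ω : Type*} {m0 : MeasurableSpace Ω}
    {μ : Measure Ω} [IsProbabilityMeasure μ] {s : Set Ω} {δ : ℝ} (hδ : 0 ≤ δ)
    (hs : μ sᶜ ≤ ENNReal.ofReal δ) : ENNReal.ofReal (1 - δ) ≤ μ s := by
  rw [ENNReal.ofReal_sub _ hδ, ENNReal.ofReal_one, tsub_le_iff_right, ← measure_univ (μ := μ)]
  exact (measure_univ_le_add_compl s).trans (add_le_add_right hs _)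

section MartingaleDifference

variable {Ω : Type*} {m0 : MeasurableSpace Ω}

def partialSum (X : ℕ → Ω → ℝ) (n : ℕ) (ω : Ω) : ℝ := ∑ t ∈ Icc 1 n, X t ω

lemma partialSum_zero (X : ℕ → Ω → ℝ) : partialSum X 0 = 0 := by
  ext ω; simp [partialSum]

lemma partialSum_succ (X : ℕ → Ω → ℝ) (n : ℕ) (ω : Ω) :
    partialSum X (n + 1) ω = partialSum X n ω + X (n + 1) ω :=
  sum_Icc_succ_top (Nat.le_add_left 1 n) _

lemma ae_abs_partialSum_le {μ : Measure Ω} {X : ℕ → Ω → ℝ} {ζ : ℝ}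
    (hbdd : ∀ t, 1 ≤ t → ∀ᵐ ω ∂μ, |X t ω| ≤ ζ) :
    ∀ᵐ ω ∂μ, ∀ n : ℕ, |partialSum X n ω| ≤ n * ζ := by
  have hall : ∀ᵐ ω ∂μ, ∀ n : ℕ, |X (n + 1) ω| ≤ ζ := ae_all_iff.2 fun n => hbdd (n + 1) n.succ_pos
  filter_upwards [hall] with ω hω n
  induction n with
  | zero => simp [partialSum_zero]
  | succ n ih =>
    rw [partialSum_succ, Nat.cast_succ, add_one_mul]
    exact (abs_add_le _ _).trans (add_le_add ih (hω n))

structure IsBoundedMartingaleDifference (μ : Measure Ω) (ℱ : Filtration ℕ m0)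
    (X : ℕ → Ω → ℝ) (ζ : ℝ) : Prop where
  stronglyMeasurable : ∀ t, 1 ≤ t → StronglyMeasurable[ℱ t] (X t)
  condExp_eq_zero : ∀ t, 1 ≤ t → μ[X t | ℱ (t - 1)] =ᵐ[μ] 0
  abs_le : ∀ t, 1 ≤ t → ∀ᵐ ω ∂μ, |X t ω| ≤ ζ

namespace IsBoundedMartingaleDifference

variable {μ : Measure Ω} {ℱ : Filtration ℕ m0} {X : ℕ → Ω → ℝ} {ζ : ℝ}

lemma stronglyMeasurable_exp_mul_partialSum (hX : IsBoundedMartingaleDifference μ ℱ X ζ)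
    (l : ℝ) (n : ℕ) : StronglyMeasurable[ℱ n] fun ω => exp (l * partialSum X n ω) := by
  refine continuous_exp.comp_stronglyMeasurable (stronglyMeasurable_const.mul ?_)
  refine Finset.stronglyMeasurable_fun_sum _ fun t ht => ?_
  obtain ⟨h1t, htn⟩ := mem_Icc.1 ht
  exact (hX.stronglyMeasurable t h1t).mono (ℱ.mono htn)

lemma integrable_exp_mul_partialSum [IsFiniteMeasure μ]
    (hX : IsBoundedMartingaleDifference μ ℱ X ζ) (l : ℝ) (n : ℕ) :
    Integrable (fun ω => exp (l * partialSum X n ω)) μ := by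
  have hmeas := (hX.stronglyMeasurable_exp_mul_partialSum l n).mono (ℱ.le n)
  refine .of_bound hmeas.aestronglyMeasurable (exp (|l| * (n * ζ))) ?_
  filter_upwards [ae_abs_partialSum_le hX.abs_le] with ω hω
  rw [norm_eq_abs, abs_exp, exp_le_exp]
  exact (le_abs_self _).trans (abs_mul l _ ▸ mul_le_mul_of_nonneg_left (hω n) (abs_nonneg l))

lemma aestronglyMeasurable_succ (hX : IsBoundedMartingaleDifference μ ℱ X ζ) (n : ℕ) :
    AEStronglyMeasurable (X (n + 1)) μ :=
  ((hX.stronglyMeasurable (n + 1) n.succ_pos).mono (ℱ.le _)).aestronglyMeasurable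

lemma condExp_succ_eq_zero (hX : IsBoundedMartingaleDifference μ ℱ X ζ) (n : ℕ) :
    μ[X (n + 1) | ℱ n] =ᵐ[μ] 0 :=
  hX.condExp_eq_zero (n + 1) n.succ_pos

lemma condExp_exp_mul_partialSum_succ [IsFiniteMeasure μ]
    (hX : IsBoundedMartingaleDifference μ ℱ X ζ) (l : ℝ) (n : ℕ) :
    μ[fun ω => exp (l * partialSum X (n + 1) ω) | ℱ n] =ᵐ[μ]
      fun ω => exp (l * partialSum X n ω) * μ[fun ω => exp (l * X (n + 1) ω) | ℱ n] ω := by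
  have hsplit : (fun ω => exp (l * partialSum X (n + 1) ω)) =
      (fun ω => exp (l * partialSum X n ω)) * fun ω => exp (l * X (n + 1) ω) := by
    ext ω; simp only [partialSum_succ, mul_add, exp_add, Pi.mul_apply]
  rw [hsplit]
  refine condExp_mul_of_stronglyMeasurable_left (hX.stronglyMeasurable_exp_mul_partialSum l n)
    (hsplit ▸ hX.integrable_exp_mul_partialSum l (n + 1)) ?_
  exact integrable_exp_mul_of_abs_le (hX.aestronglyMeasurable_succ n) (hX.abs_le _ n.succ_pos) l

theorem submartingale_exp_mul_partialSum [IsFiniteMeasure μ]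
    (hX : IsBoundedMartingaleDifference μ ℱ X ζ) (l : ℝ) :
    Submartingale (fun n ω => exp (l * partialSum X n ω)) ℱ μ := by
  refine submartingale_nat (hX.stronglyMeasurable_exp_mul_partialSum l)
    (hX.integrable_exp_mul_partialSum l) fun n => ?_
  filter_upwards [hX.condExp_exp_mul_partialSum_succ l n,
    one_le_condExp_exp_mul (ℱ.le n) (hX.aestronglyMeasurable_succ n) (hX.abs_le _ n.succ_pos)
      (hX.condExp_succ_eq_zero n) l] with ω hω h1
  rw [hω]
  exact le_mul_of_one_le_right (exp_pos _).le h1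

theorem integral_exp_mul_partialSum_le [IsProbabilityMeasure μ]
    (hX : IsBoundedMartingaleDifference μ ℱ X ζ) (l : ℝ) (n : ℕ) :
    ∫ ω, exp (l * partialSum X n ω) ∂μ ≤ exp (l ^ 2 * ζ ^ 2 * n / 2) := by
  induction n with
  | zero => simp [partialSum_zero]
  | succ n ih =>
    have hstep : μ[fun ω => exp (l * partialSum X (n + 1) ω) | ℱ n] ≤ᵐ[μ]
        fun ω => exp (l * partialSum X n ω) * exp (l ^ 2 * ζ ^ 2 / 2) := by
      filter_upwards [hX.condExp_exp_mul_partialSum_succ l n,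
        condExp_exp_mul_le (ℱ.le n) (hX.aestronglyMeasurable_succ n) (hX.abs_le _ n.succ_pos)
          (hX.condExp_succ_eq_zero n) l] with ω hω hle
      rw [hω]
      exact mul_le_mul_of_nonneg_left hle (exp_pos _).le
    calc ∫ ω, exp (l * partialSum X (n + 1) ω) ∂μ
        = ∫ ω, μ[fun ω => exp (l * partialSum X (n + 1) ω) | ℱ n] ω ∂μ :=
          (integral_condExp (ℱ.le n)).symm
      _ ≤ ∫ ω, exp (l * partialSum X n ω) * exp (l ^ 2 * ζ ^ 2 / 2) ∂μ :=
          integral_mono_ae integrable_condExp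
            ((hX.integrable_exp_mul_partialSum l n).mul_const _) hstep
      _ = (∫ ω, exp (l * partialSum X n ω) ∂μ) * exp (l ^ 2 * ζ ^ 2 / 2) := integral_mul_const _ _
      _ ≤ exp (l ^ 2 * ζ ^ 2 * n / 2) * exp (l ^ 2 * ζ ^ 2 / 2) :=
          mul_le_mul_of_nonneg_right ih (exp_pos _).le
      _ = exp (l ^ 2 * ζ ^ 2 * ↑(n + 1) / 2) := by
          rw [← exp_add]; push_cast; ring_nf

theorem measure_exists_le_partialSum_le [IsProbabilityMeasure μ]
    (hX : IsBoundedMartingaleDifference μ ℱ X ζ) (n : ℕ) {ε : ℝ} (hε : 0 ≤ ε) :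
    μ {ω | ∃ k ≤ n, ε ≤ partialSum X k ω} ≤ ENNReal.ofReal (exp (-ε ^ 2 / (2 * n * ζ ^ 2))) := by
  set l : ℝ := ε / (n * ζ ^ 2)
  have hl : 0 ≤ l := div_nonneg hε (by positivity)
  have hexponent : l ^ 2 * ζ ^ 2 * n / 2 - l * ε = -ε ^ 2 / (2 * n * ζ ^ 2) := by
    rcases eq_or_ne ((n : ℝ) * ζ ^ 2) 0 with hv | hv
    · simp [l, hv, mul_assoc]
    · obtain ⟨hn, hζ⟩ := mul_ne_zero_iff.1 hv
      simp only [l]; field_simp; ring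
  set c : NNReal := (exp (l * ε)).toNNReal
  have hc : (c : ℝ) = exp (l * ε) := coe_toNNReal _ (exp_pos _).le
  have hsubset : {ω | ∃ k ≤ n, ε ≤ partialSum X k ω} ⊆
      {ω | (c : ℝ) ≤ (range (n + 1)).sup' nonempty_range_add_one
        fun k => exp (l * partialSum X k ω)} := by
    rintro ω ⟨k, hkn, hk⟩
    rw [Set.mem_ofPred_eq, hc]
    exact (exp_le_exp.2 (mul_le_mul_of_nonneg_left hk hl)).trans
      (le_sup' (fun k => exp (l * partialSum X k ω)) (mem_range_succ_iff.2 hkn))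
  have hdoob := maximal_ineq (hX.submartingale_exp_mul_partialSum l)
    (fun _ _ => (exp_pos _).le) (ε := c) n
  have hmarkov : μ {ω | ∃ k ≤ n, ε ≤ partialSum X k ω} * ENNReal.ofReal (exp (l * ε)) ≤
      ENNReal.ofReal (exp (l ^ 2 * ζ ^ 2 * n / 2)) := by
    rw [mul_comm]
    calc ENNReal.ofReal (exp (l * ε)) * μ {ω | ∃ k ≤ n, ε ≤ partialSum X k ω}
        ≤ c • μ _ := mul_le_mul_right (measure_mono hsubset) _
      _ ≤ _ := hdoob
      _ ≤ _ := ENNReal.ofReal_le_ofReal ((setIntegral_le_integral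
          (hX.integrable_exp_mul_partialSum l n) (ae_of_all _ fun _ => (exp_pos _).le)).trans
          (hX.integral_exp_mul_partialSum_le l n))
  rw [← hexponent, exp_sub, ENNReal.ofReal_div_of_pos (exp_pos _)]
  exact (ENNReal.le_div_iff_mul_le (.inl (by simp [exp_pos])) (.inl ENNReal.ofReal_ne_top)).2
    hmarkov

end IsBoundedMartingaleDifference

end MartingaleDifference

def epoch : ℕ → ℕ
  | 0 => 11
  | j + 1 => 3 * epoch j / 2

lemma eleven_le_epoch (j : ℕ) : 11 ≤ epoch j := by
  induction j with
  | zero => rfl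
  | succ j ih => simp only [epoch]; omega

lemma epoch_lt_epoch_succ (j : ℕ) : epoch j < epoch (j + 1) := by
  have := eleven_le_epoch j
  simp only [epoch]; omega

lemma two_mul_epoch_succ_le (j : ℕ) : 2 * epoch (j + 1) ≤ 3 * epoch j := by
  simp only [epoch]; omega

lemma sixteen_mul_epoch_le (j : ℕ) : 16 * epoch j ≤ 11 * epoch (j + 1) := by
  have := eleven_le_epoch j
  simp only [epoch]; omega

lemma exists_epoch_le_lt {N : ℕ} (hN : 11 ≤ N) : ∃ j, epoch j ≤ N ∧ N < epoch (j + 1) := by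
  induction N, hN using Nat.le_induction with
  | base => exact ⟨0, le_rfl, by decide⟩
  | succ N _ ih =>
    obtain ⟨j, hjN, hNj⟩ := ih
    rcases (Nat.succ_le_of_lt hNj).lt_or_eq with hlt | heq
    · exact ⟨j, by omega, hlt⟩
    · exact ⟨j + 1, heq.ge, by have := epoch_lt_epoch_succ (j + 1); omega⟩

lemma log_epoch_add_third_le (j : ℕ) : log (epoch j) + 1 / 3 ≤ log (epoch (j + 1)) := by
  have hpos (i : ℕ) : (0 : ℝ) < epoch i := by
    exact_mod_cast (eleven_le_epoch i).trans_lt' (by norm_num)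
  have hexp : exp (1 / 3) ≤ 16 / 11 := by
    refine le_of_pow_le_pow_left₀ three_ne_zero (by norm_num) ?_
    rw [← exp_nat_mul]
    norm_num
    linarith [exp_one_lt_d9]
  have hratio : (16 : ℝ) * epoch j ≤ 11 * epoch (j + 1) := by exact_mod_cast sixteen_mul_epoch_le j
  rw [← le_sub_iff_add_le', ← log_div (hpos _).ne' (hpos _).ne',
    le_log_iff_exp_le (div_pos (hpos _) (hpos _)), le_div_iff₀ (hpos _)]
  nlinarith

lemma Real.rpow_neg_one_third_pow_three {x : ℝ} (hx : 0 ≤ x) : (x ^ (-(1 / 3) : ℝ)) ^ 3 = x⁻¹ := by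
  rw [← rpow_natCast, ← rpow_mul hx]; norm_num [rpow_neg_one]

lemma Real.sub_mul_rpow_neg_four_thirds_le {u y : ℝ} (hu : 0 < u) (hy : 0 < y) :
    (y - u) * y ^ (-(4 / 3) : ℝ) ≤ 3 * (u ^ (-(1 / 3) : ℝ) - y ^ (-(1 / 3) : ℝ)) := by
  set p := u ^ (-(1 / 3) : ℝ)
  set q := y ^ (-(1 / 3) : ℝ)
  have hp : 0 < p := rpow_pos_of_pos hu _
  have hq : 0 < q := rpow_pos_of_pos hy _
  have hup : u * p ^ 3 = 1 := by rw [rpow_neg_one_third_pow_three hu.le, mul_inv_cancel₀ hu.ne']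
  have hyq : y * q ^ 3 = 1 := by rw [rpow_neg_one_third_pow_three hy.le, mul_inv_cancel₀ hy.ne']
  have hq4 : y ^ (-(4 / 3) : ℝ) = q ^ 4 := by
    rw [← rpow_natCast, ← rpow_mul hy.le]; norm_num
  rw [hq4]
  -- times `p³`, the claim is `3 p⁴ - 4 p³ q + q⁴ = (p - q)² (3 p² + 2 p q + q²) ≥ 0`
  have hlhs : (y - u) * q ^ 4 * p ^ 3 = q * p ^ 3 - q ^ 4 := by
    linear_combination (q * p ^ 3) * hyq - q ^ 4 * hup
  have key : 0 ≤ (p - q) ^ 2 * (3 * p ^ 2 + 2 * p * q + q ^ 2) := by positivity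
  refine le_of_mul_le_mul_right ?_ (pow_pos hp 3)
  linarith

lemma sum_range_rpow_neg_four_thirds_le {x : ℕ → ℝ} {a : ℝ} (ha : 0 < a) (hx : a < x 0)
    (hstep : ∀ j, x j + a ≤ x (j + 1)) (J : ℕ) :
    ∑ j ∈ range J, x j ^ (-(4 / 3) : ℝ) ≤ 3 / a * (x 0 - a) ^ (-(1 / 3) : ℝ) := by
  induction J generalizing x with
  | zero => simp only [sum_range_zero]; positivity
  | succ J ih =>
    have hx0 : 0 < x 0 - a := sub_pos.2 hx
    have hshift := ih (x := fun j => x (j + 1)) (by linarith [hstep 0]) fun j => hstep (j + 1)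
    have hmono : (x 1 - a) ^ (-(1 / 3) : ℝ) ≤ x 0 ^ (-(1 / 3) : ℝ) :=
      rpow_le_rpow_of_nonpos (by linarith) (by linarith [hstep 0]) (by norm_num)
    have htangent := sub_mul_rpow_neg_four_thirds_le hx0 (hx0.trans (sub_lt_self _ ha))
    rw [sub_sub_cancel] at htangent
    rw [sum_range_succ']
    calc ∑ j ∈ range J, x (j + 1) ^ (-(4 / 3) : ℝ) + x 0 ^ (-(4 / 3) : ℝ)
        ≤ 3 / a * x 0 ^ (-(1 / 3) : ℝ) + x 0 ^ (-(4 / 3) : ℝ) := by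
          gcongr; exact hshift.trans (mul_le_mul_of_nonneg_left hmono (by positivity))
      _ ≤ 3 / a * (x 0 - a) ^ (-(1 / 3) : ℝ) := by
          have hterm : x 0 ^ (-(4 / 3) : ℝ) ≤
              3 / a * ((x 0 - a) ^ (-(1 / 3) : ℝ) - x 0 ^ (-(1 / 3) : ℝ)) := by
            rw [div_mul_eq_mul_div, le_div_iff₀ ha]; linarith
          linarith [mul_sub (3 / a) ((x 0 - a) ^ (-(1 / 3) : ℝ)) (x 0 ^ (-(1 / 3) : ℝ))]

lemma sum_range_rpow_six_mul_log_epoch_le_one (J : ℕ) :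
    ∑ j ∈ range J, (6 * log (epoch j)) ^ (-(4 / 3) : ℝ) ≤ 1 := by
  have hlog11 : 1 < log 11 := by
    rw [lt_log_iff_exp_lt (by norm_num)]; linarith [exp_one_lt_d9]
  have hx0 : (4 : ℝ) ≤ 6 * log (epoch 0) - 2 := by simp only [epoch]; push_cast; linarith
  refine (sum_range_rpow_neg_four_thirds_le two_pos (by linarith)
    (fun j => by linarith [log_epoch_add_third_le j]) J).trans ?_
  have hcube : (6 * log (epoch 0) - 2) ^ (-(1 / 3) : ℝ) ≤ 2 / 3 := by
    refine le_of_pow_le_pow_left₀ three_ne_zero (by norm_num) ?_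
    rw [rpow_neg_one_third_pow_three (by linarith)]
    calc (6 * log (epoch 0) - 2)⁻¹ ≤ 4⁻¹ := inv_anti₀ (by norm_num) hx0
      _ ≤ (2 / 3) ^ 3 := by norm_num
  linarith

lemma exp_neg_four_thirds_mul_log_div_le {x δ : ℝ} (hx : 0 < x) (hδ0 : 0 < δ) (hδ1 : δ ≤ 1) :
    exp (-(4 / 3) * log (x / δ)) ≤ δ * x ^ (-(4 / 3) : ℝ) := by
  rw [mul_comm, ← rpow_def_of_pos (div_pos hx hδ0), div_rpow hx.le hδ0.le, rpow_neg hδ0.le,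
    div_inv_eq_mul, mul_comm]
  gcongr
  simpa using rpow_le_rpow_of_exponent_ge hδ0 hδ1 (by norm_num : (1 : ℝ) ≤ 4 / 3)

lemma exp_natCast_div_four_le {k : ℕ} {c : ℝ} (hc : 0 ≤ c) (h : 2.7182818286 ^ k ≤ c ^ 4) :
    exp (k / 4) ≤ c := by
  refine le_of_pow_le_pow_left₀ four_ne_zero hc ?_
  rw [← exp_nat_mul, Nat.cast_ofNat, mul_div_cancel₀ _ four_ne_zero, ← exp_one_pow]
  exact (pow_le_pow_left₀ (exp_pos 1).le exp_one_lt_d9.le k).trans h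

lemma le_four_mul_log_six_mul_log {N : ℕ} (h2 : 2 ≤ N) (h10 : N ≤ 10) :
    (N : ℝ) ≤ 4 * log (6 * log N) := by
  have hmono {M : ℕ} (hM : 2 ≤ M) (hMN : M ≤ N) : log (6 * log M) ≤ log (6 * log N) := by
    have hlogM : 0 < log M := log_pos (by exact_mod_cast hM)
    gcongr
  have hlog2 := log_two_gt_d9
  have hlog6 : 1 + log 2 ≤ log 6 := by
    rw [← log_exp 1, ← log_mul (exp_pos 1).ne' two_ne_zero]
    exact log_le_log (by positivity) (by linarith [exp_one_lt_d9])
  have hlog8 : log 8 = 3 * log 2 := by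
    rw [show (8 : ℝ) = 2 ^ 3 by norm_num, log_pow]; norm_num
  have hcase {M k : ℕ} (c : ℝ) (hM : 2 ≤ M) (hMN : M ≤ N) (hNk : N ≤ k) (hc : c ≤ 6 * log M)
      (hck : 2.7182818286 ^ k ≤ c ^ 4) (hc0 : 0 < c) : (N : ℝ) ≤ 4 * log (6 * log N) := by
    have hk : (k : ℝ) / 4 ≤ log c := (le_log_iff_exp_le hc0).2 (exp_natCast_div_four_le hc0.le hck)
    have hNk' : (N : ℝ) ≤ k := by exact_mod_cast hNk
    linarith [log_le_log hc0 hc, hmono hM hMN]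
  rcases Nat.lt_or_ge N 6 with h5 | h6
  · exact hcase (M := 2) (k := 5) (6 * 0.6931) le_rfl h2 (by omega)
      (by push_cast; linarith) (by norm_num) (by norm_num)
  rcases Nat.lt_or_ge N 8 with h7 | h8
  · exact hcase (M := 6) (k := 7) (6 * 1.6931) (by norm_num) h6 (by omega)
      (by push_cast; linarith) (by norm_num) (by norm_num)
  · exact hcase (M := 8) (k := 10) (6 * 2.0794) (by norm_num) h8 h10
      (by push_cast; linarith) (by norm_num) (by norm_num)

noncomputable def anytimeRadius (ζ δ : ℝ) (N : ℕ) : ℝ := 2 * ζ * √(N * log (6 * log N / δ))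

section AnytimeRadius

variable {ζ δ : ℝ}

lemma log_six_mul_log_div_nonneg (hδ0 : 0 < δ) (hδ1 : δ ≤ 1) {N : ℕ} (hN : 2 ≤ N) :
    0 ≤ log (6 * log N / δ) := by
  have hlog : log 2 ≤ log N := log_le_log two_pos (by exact_mod_cast hN)
  refine log_nonneg ((one_le_div hδ0).2 ?_)
  linarith [log_two_gt_d9]

lemma anytimeRadius_sq (hδ0 : 0 < δ) (hδ1 : δ ≤ 1) {N : ℕ} (hN : 2 ≤ N) :
    anytimeRadius ζ δ N ^ 2 = 4 * ζ ^ 2 * (N * log (6 * log N / δ)) := by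
  rw [anytimeRadius, mul_pow, sq_sqrt (by positivity [log_six_mul_log_div_nonneg hδ0 hδ1 hN])]
  ring

lemma anytimeRadius_le_anytimeRadius (hζ : 0 ≤ ζ) (hδ0 : 0 < δ) (hδ1 : δ ≤ 1) {M N : ℕ}
    (hM : 2 ≤ M) (hMN : M ≤ N) : anytimeRadius ζ δ M ≤ anytimeRadius ζ δ N := by
  have hlogM : 0 < log M := log_pos (by exact_mod_cast hM)
  have hMN' : (M : ℝ) ≤ N := by exact_mod_cast hMN
  unfold anytimeRadius
  gcongr
  exact log_six_mul_log_div_nonneg hδ0 hδ1 hM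

lemma natCast_mul_le_anytimeRadius (hζ : 0 ≤ ζ) (hδ0 : 0 < δ) (hδ1 : δ ≤ 1) {N : ℕ}
    (h2 : 2 ≤ N) (h10 : N ≤ 10) : N * ζ ≤ anytimeRadius ζ δ N := by
  have hL : log (6 * log N) ≤ log (6 * log N / δ) := by
    have hlogN : 0 < log N := log_pos (by exact_mod_cast h2)
    gcongr
    exact le_div_self (by positivity) hδ0 hδ1
  have hhalf : (N : ℝ) / 2 ≤ √(N * log (6 * log N / δ)) := by
    refine le_sqrt_of_sq_le ?_
    nlinarith [le_four_mul_log_six_mul_log h2 h10]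
  calc (N : ℝ) * ζ = 2 * ζ * (N / 2) := by ring
    _ ≤ anytimeRadius ζ δ N := by unfold anytimeRadius; gcongr

lemma le_anytimeRadius_of_forall_epoch {s : ℕ → ℝ} (hζ : 0 ≤ ζ) (hδ0 : 0 < δ) (hδ1 : δ ≤ 1)
    (hs : ∀ n, s n ≤ n * ζ) (hepoch : ∀ j, ∀ k ≤ epoch (j + 1), s k < anytimeRadius ζ δ (epoch j))
    {N : ℕ} (hN : 2 ≤ N) : s N ≤ anytimeRadius ζ δ N := by
  rcases Nat.lt_or_ge N 11 with hsmall | hlarge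
  · exact (hs N).trans (natCast_mul_le_anytimeRadius hζ hδ0 hδ1 hN (by omega))
  obtain ⟨j, hjN, hNj⟩ := exists_epoch_le_lt hlarge
  exact (hepoch j N hNj.le).le.trans
    (anytimeRadius_le_anytimeRadius hζ hδ0 hδ1 ((eleven_le_epoch j).trans' (by norm_num)) hjN)

lemma exp_neg_sq_anytimeRadius_epoch_le (hζ : 0 < ζ) (hδ0 : 0 < δ) (hδ1 : δ ≤ 1) (j : ℕ) :
    exp (-anytimeRadius ζ δ (epoch j) ^ 2 / (2 * epoch (j + 1) * ζ ^ 2)) ≤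
      δ * (6 * log (epoch j)) ^ (-(4 / 3) : ℝ) := by
  have h11 := eleven_le_epoch j
  have hL := log_six_mul_log_div_nonneg hδ0 hδ1 (h11.trans' (by norm_num))
  have hpos : (0 : ℝ) < epoch (j + 1) := by
    exact_mod_cast (eleven_le_epoch _).trans_lt' (by norm_num)
  have hratio : (2 : ℝ) * epoch (j + 1) ≤ 3 * epoch j := by exact_mod_cast two_mul_epoch_succ_le j
  have hlog : 0 < 6 * log (epoch j) := by
    have : (1 : ℝ) < epoch j := by exact_mod_cast h11.trans_lt' (by norm_num)
    have := log_pos this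
    positivity
  refine le_trans ?_ (exp_neg_four_thirds_mul_log_div_le hlog hδ0 hδ1)
  rw [exp_le_exp, anytimeRadius_sq hδ0 hδ1 (h11.trans' (by norm_num)), neg_div, neg_mul,
    neg_le_neg_iff, le_div_iff₀ (by positivity)]
  nlinarith [mul_le_mul_of_nonneg_right hratio (mul_nonneg hL (sq_nonneg ζ))]

end AnytimeRadius

namespace IsBoundedMartingaleDifference

variable {Ω : Type*} {m0 : MeasurableSpace Ω} {μ : Measure Ω} {ℱ : Filtration ℕ m0}
  {X : ℕ → Ω → ℝ} {ζ : ℝ}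

theorem measure_iUnion_epoch_le [IsProbabilityMeasure μ]
    (hX : IsBoundedMartingaleDifference μ ℱ X ζ) (hζ : 0 < ζ) {δ : ℝ} (hδ0 : 0 < δ) (hδ1 : δ ≤ 1) :
    μ (⋃ j, {ω | ∃ k ≤ epoch (j + 1), anytimeRadius ζ δ (epoch j) ≤ partialSum X k ω}) ≤
      ENNReal.ofReal δ := by
  have hradius (j : ℕ) : 0 ≤ anytimeRadius ζ δ (epoch j) := by unfold anytimeRadius; positivity
  calc _ ≤ ∑' j, μ {ω | ∃ k ≤ epoch (j + 1), anytimeRadius ζ δ (epoch j) ≤ partialSum X k ω} :=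
        measure_iUnion_le _
    _ ≤ ∑' j, ENNReal.ofReal (δ * (6 * log (epoch j)) ^ (-(4 / 3) : ℝ)) :=
        ENNReal.tsum_le_tsum fun j => (hX.measure_exists_le_partialSum_le _ (hradius j)).trans
          (ENNReal.ofReal_le_ofReal (exp_neg_sq_anytimeRadius_epoch_le hζ hδ0 hδ1 j))
    _ ≤ ENNReal.ofReal δ := ENNReal.tsum_le_of_sum_range_le fun J => by
        rw [← ENNReal.ofReal_sum_of_nonneg fun j _ => by positivity, ← mul_sum]
        exact ENNReal.ofReal_le_ofReal
          (mul_le_of_le_one_right hδ0.le (sum_range_rpow_six_mul_log_epoch_le_one J))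

end IsBoundedMartingaleDifference

theorem martingale_difference_anytime_bound_general
    {Ω : Type*} {m0 : MeasurableSpace Ω} (μ : Measure Ω) [IsProbabilityMeasure μ]
    (ℱ : Filtration ℕ m0) (X : ℕ → Ω → ℝ) (ζ : ℝ) (hζ : 0 < ζ)
    (hadapted : ∀ t, 1 ≤ t → StronglyMeasurable[ℱ t] (X t))
    (hmdz : ∀ t, 1 ≤ t → μ[X t | ℱ (t - 1)] =ᵐ[μ] 0)
    (hbdd : ∀ t, 1 ≤ t → ∀ᵐ ω ∂μ, |X t ω| ≤ ζ)
    (δ : ℝ) (hδ0 : 0 < δ) (hδ1 : δ ≤ 1) :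
    ENNReal.ofReal (1 - δ) ≤
      μ {ω | ∀ N : ℕ, 2 ≤ N →
        ∑ t ∈ Finset.Icc 1 N, X t ω ≤
          2 * ζ * Real.sqrt (N * Real.log (6 * Real.log N / δ))} := by
  have hX : IsBoundedMartingaleDifference μ ℱ X ζ := ⟨hadapted, hmdz, hbdd⟩
  refine ofReal_one_sub_le_measure hδ0.le
    ((measure_mono_ae ?_).trans (hX.measure_iUnion_epoch_le hζ hδ0 hδ1))
  filter_upwards [ae_abs_partialSum_le hbdd] with ω hω hbad
  by_contra hgood
  refine hbad fun N hN => le_anytimeRadius_of_forall_epoch hζ.le hδ0 hδ1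
    (fun n => (le_abs_self _).trans (hω n)) (fun j k hk => ?_) hN
  by_contra hk'
  exact hgood (Set.mem_iUnion.2 ⟨j, k, hk, not_lt.1 hk'⟩)

/-- anytime martingale concentration. For a bounded martingale difference
sequence `(X_t)_{t ≥ 1}` with `|X_t| ≤ ζ`, with probability at least `1 - δ`, simultaneously
for all `N ≥ 2`: `∑_{t=1}^N X_t ≤ 2 ζ √(N ln(6 ln N / δ))`. -/
theorem martingale_difference_anytime_bound
    {Ω : Type*} {m0 : MeasurableSpace Ω} (μ : Measure Ω) [IsProbabilityMeasure μ]
    (ℱ : Filtration ℕ m0) (X : ℕ → Ω → ℝ) (ζ : ℝ) (hζ : 0 < ζ)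
    (hadapted : ∀ t, 1 ≤ t → StronglyMeasurable[ℱ t] (X t))
    (hint : ∀ t, 1 ≤ t → Integrable (X t) μ)
    (hmdz : ∀ t, 1 ≤ t → μ[X t | ℱ (t - 1)] =ᵐ[μ] 0)
    (hbdd : ∀ t, 1 ≤ t → ∀ᵐ ω ∂μ, |X t ω| ≤ ζ)
    (δ : ℝ) (hδ0 : 0 < δ) (hδ1 : δ ≤ 1) :
    ENNReal.ofReal (1 - δ) ≤
      μ {ω | ∀ N : ℕ, 2 ≤ N →
        ∑ t ∈ Finset.Icc 1 N, X t ω ≤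
          2 * ζ * Real.sqrt (N * Real.log (6 * Real.log N / δ))} :=
  martingale_difference_anytime_bound_general μ ℱ X ζ hζ hadapted hmdz hbdd δ hδ0 hδ1
end

section
/- Let λ > 0 and let B, C ∈ ℝ^{d×d} be symmetric matrices with λI ⪯ C ⪯ B (so both are positive definite). If x ∈ ℝ^d is nonzero and satisfies ‖x‖_{C^{-1}} ≥ 2 ‖x‖_{B^{-1}}, then det(B) ≥ 4 · det(C). -/
open Matrix
open scoped MatrixOrder

/-!
Factor `C = Rᴴ R` and put `E = R⁻ᴴ (B - C) R⁻¹ ⪰ 0`, so that `B = Rᴴ (1 + E) R` and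
`det B = det C · det (1 + E)`. With `z = C⁻¹ x`, Cauchy–Schwarz for the form of `B` gives
`(xᵀ C⁻¹ x)² ≤ (zᵀ B z)(xᵀ B⁻¹ x)`, so the hypothesis forces `zᵀ B z ≥ 4 zᵀ C z`, i.e.
`yᵀ E y ≥ 3 ‖y‖²` for `y = R z`. Hence `tr E ≥ 3`, and
`det (1 + E) = ∏ (1 + μᵢ) ≥ 1 + tr E ≥ 4`.
-/

theorem Finset.one_add_sum_le_prod_one_add {ι R : Type*} [CommSemiring R] [PartialOrder R]
    [IsOrderedRing R] (s : Finset ι) {f : ι → R} (hf : ∀ i ∈ s, 0 ≤ f i) :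
    1 + ∑ i ∈ s, f i ≤ ∏ i ∈ s, (1 + f i) := by
  induction s using Finset.cons_induction with
  | empty => simp
  | cons a s _ ih =>
    rw [Finset.sum_cons, Finset.prod_cons]
    set S := ∑ i ∈ s, f i
    have hfa := hf a (Finset.mem_cons_self a s)
    have hS : 0 ≤ S := Finset.sum_nonneg fun i hi => hf i (Finset.mem_cons_of_mem hi)
    calc 1 + (f a + S) ≤ 1 + (f a + S) + f a * S := le_add_of_nonneg_right (mul_nonneg hfa hS)
      _ = (1 + f a) * (1 + S) := by ring
      _ ≤ (1 + f a) * ∏ i ∈ s, (1 + f i) :=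
          mul_le_mul_of_nonneg_left (ih fun i hi => hf i (Finset.mem_cons_of_mem hi))
            (add_nonneg zero_le_one hfa)

namespace Matrix

variable {n : Type*} [Fintype n]

theorem dotProduct_mulVec_conjTranspose_mul_mul {m : Type*} [Fintype m] (R : Matrix m n ℝ)
    (M : Matrix m m ℝ) (z : n → ℝ) :
    z ⬝ᵥ (Rᴴ * M * R) *ᵥ z = (R *ᵥ z) ⬝ᵥ M *ᵥ (R *ᵥ z) := by
  simp only [← mulVec_mulVec, dotProduct_mulVec z, vecMul_conjTranspose, star_trivial]

theorem PosSemidef.dotProduct_mulVec_sq_le {A : Matrix n n ℝ} (hA : A.PosSemidef)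
    (u v : n → ℝ) : (u ⬝ᵥ A *ᵥ v) ^ 2 ≤ (u ⬝ᵥ A *ᵥ u) * (v ⬝ᵥ A *ᵥ v) := by
  let := A.toSeminormedAddCommGroup hA
  let := A.toInnerProductSpace hA
  have hinner : ∀ a b : n → ℝ, (inner ℝ a b : ℝ) = a ⬝ᵥ A *ᵥ b := fun a b => by
    change (A *ᵥ b) ⬝ᵥ star a = _
    rw [star_trivial, dotProduct_comm]
  have h := real_inner_mul_inner_self_le u v
  rw [hinner, hinner, hinner] at h
  nlinarith [abs_mul_abs_self (u ⬝ᵥ A *ᵥ v)]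

theorem PosDef.sq_dotProduct_le_mul_inv [DecidableEq n] {B : Matrix n n ℝ} (hB : B.PosDef)
    (z x : n → ℝ) : (z ⬝ᵥ x) ^ 2 ≤ (z ⬝ᵥ B *ᵥ z) * (x ⬝ᵥ B⁻¹ *ᵥ x) := by
  have hBx : B *ᵥ (B⁻¹ *ᵥ x) = x := by
    rw [mulVec_mulVec, mul_nonsing_inv _ hB.det_pos.ne'.isUnit, one_mulVec]
  have h := hB.posSemidef.dotProduct_mulVec_sq_le z (B⁻¹ *ᵥ x)
  rwa [hBx, dotProduct_comm (B⁻¹ *ᵥ x)] at h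

theorem PosSemidef.dotProduct_mulVec_le_trace_mul [DecidableEq n] {E : Matrix n n ℝ}
    (hE : E.PosSemidef) (y : n → ℝ) : y ⬝ᵥ E *ᵥ y ≤ E.trace * (y ⬝ᵥ y) := by
  obtain ⟨F, rfl⟩ := CStarAlgebra.nonneg_iff_eq_star_mul_self.mp hE.nonneg
  have hquad : y ⬝ᵥ (star F * F) *ᵥ y = ∑ i, (F *ᵥ y) i ^ 2 := by
    rw [← mulVec_mulVec, dotProduct_mulVec, star_eq_conjTranspose, vecMul_conjTranspose]
    simp [dotProduct, sq]
  have htrace : (star F * F).trace = ∑ i, ∑ j, F i j ^ 2 := by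
    simp only [trace, diag_apply, mul_apply, star_apply, star_trivial, sq]
    exact Finset.sum_comm
  have hrow : ∀ i, (F *ᵥ y) i ^ 2 ≤ (∑ j, F i j ^ 2) * (y ⬝ᵥ y) := fun i => by
    simpa [mulVec, dotProduct, sq] using Finset.sum_mul_sq_le_sq_mul_sq Finset.univ (F i) y
  rw [hquad, htrace, Finset.sum_mul]
  exact Finset.sum_le_sum fun i _ => hrow i

theorem IsHermitian.det_one_add [DecidableEq n] {E : Matrix n n ℝ} (hE : E.IsHermitian) :
    (1 + E).det = ∏ i, (1 + hE.eigenvalues i) := by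
  conv_lhs => rw [hE.spectral_theorem, ← map_one (Unitary.conjStarAlgAut ℝ _ _), ← map_add,
    Unitary.conjStarAlgAut_apply, det_mul_right_comm]
  simp [← diagonal_one, diagonal_add]

theorem PosSemidef.one_add_trace_le_det_one_add [DecidableEq n] {E : Matrix n n ℝ}
    (hE : E.PosSemidef) : 1 + E.trace ≤ (1 + E).det := by
  rw [hE.isHermitian.det_one_add, hE.isHermitian.trace_eq_sum_eigenvalues]
  exact Finset.univ.one_add_sum_le_prod_one_add fun i _ => hE.eigenvalues_nonneg i

theorem PosSemidef.one_add_le_det_one_add [DecidableEq n] {E : Matrix n n ℝ}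
    (hE : E.PosSemidef) {y : n → ℝ} (hy : y ≠ 0) {c : ℝ}
    (hc : c * (y ⬝ᵥ y) ≤ y ⬝ᵥ E *ᵥ y) :
    1 + c ≤ (1 + E).det := by
  have hyy : 0 < y ⬝ᵥ y := dotProduct_self_star_pos_iff.mpr hy
  have htrace : c ≤ E.trace :=
    le_of_mul_le_mul_right (hc.trans (hE.dotProduct_mulVec_le_trace_mul y)) hyy
  linarith [hE.one_add_trace_le_det_one_add]

theorem PosDef.mul_det_le_det_of_dotProduct_mulVec [DecidableEq n] {B C : Matrix n n ℝ}
    (hC : C.PosDef) (hCB : (B - C).PosSemidef) {z : n → ℝ} (hz : z ≠ 0) {k : ℝ}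
    (hk : k * (z ⬝ᵥ C *ᵥ z) ≤ z ⬝ᵥ B *ᵥ z) : k * C.det ≤ B.det := by
  obtain ⟨R, rfl⟩ := CStarAlgebra.nonneg_iff_eq_star_mul_self.mp hC.posSemidef.nonneg
  rw [star_eq_conjTranspose] at *
  have hCdet := hC.det_pos
  rw [det_mul] at hCdet
  have hR : IsUnit R.det := (right_ne_zero_of_mul hCdet.ne').isUnit
  set E := R⁻¹ᴴ * (B - Rᴴ * R) * R⁻¹
  have hE : E.PosSemidef := hCB.conjTranspose_mul_mul_same R⁻¹
  have hRER : Rᴴ * E * R = B - Rᴴ * R := by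
    have h1 : Rᴴ * R⁻¹ᴴ = 1 := by
      rw [← conjTranspose_mul, nonsing_inv_mul _ hR, conjTranspose_one]
    simp only [E, ← mul_assoc, h1, one_mul]
    rw [mul_assoc _ R⁻¹, nonsing_inv_mul _ hR, mul_one]
  have hRz : R *ᵥ z ≠ 0 := fun h => hz <| mulVec_injective_iff_isUnit.mpr
    ((isUnit_iff_isUnit_det R).mpr hR) (h.trans (mulVec_zero R).symm)
  have hdetE : 1 + (k - 1) ≤ (1 + E).det := by
    refine hE.one_add_le_det_one_add hRz ?_
    calc (k - 1) * ((R *ᵥ z) ⬝ᵥ (R *ᵥ z))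
        = (k - 1) * (z ⬝ᵥ (Rᴴ * R) *ᵥ z) := by
          rw [← mul_one Rᴴ, dotProduct_mulVec_conjTranspose_mul_mul, one_mulVec]
      _ ≤ z ⬝ᵥ (B - Rᴴ * R) *ᵥ z := by rw [sub_mulVec, dotProduct_sub]; linarith
      _ = (R *ᵥ z) ⬝ᵥ E *ᵥ (R *ᵥ z) := by
          rw [← hRER, dotProduct_mulVec_conjTranspose_mul_mul]
  have hB : B = Rᴴ * (1 + E) * R := by
    rw [mul_add, add_mul, mul_one, hRER]
    abel
  rw [hB, det_mul, det_mul, det_mul]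
  nlinarith

theorem PosDef.mul_det_le_det_of_dotProduct_inv_mulVec [DecidableEq n] {B C : Matrix n n ℝ}
    (hC : C.PosDef) (hCB : (B - C).PosSemidef) {x : n → ℝ} (hx : x ≠ 0) {k : ℝ}
    (hk : k * (x ⬝ᵥ B⁻¹ *ᵥ x) ≤ x ⬝ᵥ C⁻¹ *ᵥ x) : k * C.det ≤ B.det := by
  have hB : B.PosDef := by simpa using hC.add_posSemidef hCB
  set z := C⁻¹ *ᵥ x
  have hCz : C *ᵥ z = x := by
    rw [mulVec_mulVec, mul_nonsing_inv _ hC.det_pos.ne'.isUnit, one_mulVec]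
  have hz : z ≠ 0 := fun h => hx (by rw [← hCz, h, mulVec_zero])
  have hzCz : z ⬝ᵥ C *ᵥ z = x ⬝ᵥ C⁻¹ *ᵥ x := by rw [hCz, dotProduct_comm]
  have hs : 0 ≤ x ⬝ᵥ C⁻¹ *ᵥ x := hC.inv.posSemidef.dotProduct_mulVec_nonneg x
  have ht : 0 < x ⬝ᵥ B⁻¹ *ᵥ x := hB.inv.dotProduct_mulVec_pos hx
  have hcs := hB.sq_dotProduct_le_mul_inv z x
  rw [dotProduct_comm z x] at hcs
  refine hC.mul_det_le_det_of_dotProduct_mulVec hCB hz ?_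
  rw [hzCz]
  nlinarith

end Matrix

theorem det_ge_four_of_inv_norm_doubled_general
    (d : ℕ) (lam : ℝ) (hlam : 0 < lam)
    (B C : Matrix (Fin d) (Fin d) ℝ)
    (hlow : (C - lam • (1 : Matrix (Fin d) (Fin d) ℝ)).PosSemidef)
    (hCB : (B - C).PosSemidef)
    (x : Fin d → ℝ) (hx : x ≠ 0)
    (hnorm : 2 * Real.sqrt (x ⬝ᵥ B⁻¹.mulVec x) ≤ Real.sqrt (x ⬝ᵥ C⁻¹.mulVec x)) :
    4 * C.det ≤ B.det := by
  have hC : C.PosDef := by simpa using PosDef.posSemidef_add hlow (PosDef.one.smul hlam)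
  have hB : B.PosDef := by simpa using hC.add_posSemidef hCB
  have hs : 0 ≤ x ⬝ᵥ C⁻¹ *ᵥ x := hC.inv.posSemidef.dotProduct_mulVec_nonneg x
  have ht : 0 ≤ x ⬝ᵥ B⁻¹ *ᵥ x := hB.inv.posSemidef.dotProduct_mulVec_nonneg x
  refine hC.mul_det_le_det_of_dotProduct_inv_mulVec hCB hx ?_
  have h := pow_le_pow_left₀ (by positivity) hnorm 2
  rw [mul_pow, Real.sq_sqrt ht, Real.sq_sqrt hs] at h
  linarith

/-- If `λI ⪯ C ⪯ B` (symmetric, hence positive definite) and the nonzero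
vector `x` satisfies `‖x‖_{C⁻¹} ≥ 2 ‖x‖_{B⁻¹}`, then `det B ≥ 4 det C`. -/
theorem det_ge_four_of_inv_norm_doubled
    (d : ℕ) (lam : ℝ) (hlam : 0 < lam)
    (B C : Matrix (Fin d) (Fin d) ℝ)
    (hBsymm : B.IsSymm) (hCsymm : C.IsSymm)
    (hlow : (C - lam • (1 : Matrix (Fin d) (Fin d) ℝ)).PosSemidef)
    (hCB : (B - C).PosSemidef)
    (x : Fin d → ℝ) (hx : x ≠ 0)
    (hnorm : 2 * Real.sqrt (x ⬝ᵥ B⁻¹.mulVec x) ≤ Real.sqrt (x ⬝ᵥ C⁻¹.mulVec x)) :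
    4 * C.det ≤ B.det :=
  det_ge_four_of_inv_norm_doubled_general d lam hlam B C hlow hCB x hx hnorm
end

section
/- Fix P, d, d' ∈ ℕ and constants W ≥ 0, γ ≥ 0. For each p ∈ [P], let Σ^{(p)} ∈ ℝ^{d×d} be positive definite, let φ^{(p)} ∈ ℝ^d, let M̄^{(p)}, M̃^{(p)}, M_⋆^{(p)} ∈ ℝ^{d×d'}, and let w^{(p)} ∈ ℝ^{d'} with ‖w^{(p)}‖₂ ≤ W. Assume ∑_{p=1}^{P} ‖(Σ^{(p)})^{1/2}( M̄^{(p)} − M̃^{(p)} )‖_F² ≤ γ and ∑_{p=1}^{P} ‖(Σ^{(p)})^{1/2}( M_⋆^{(p)} − M̃^{(p)} )‖_F² ≤ γ. Then ∑_{p=1}^{P} (φ^{(p)})ᵀ ( M̄^{(p)} − M_⋆^{(p)} ) w^{(p)} ≤ 2 W √( γ · ∑_{p=1}^{P} ‖φ^{(p)}‖²_{(Σ^{(p)})^{-1}} ). -/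
/-!
Write `Σ = S²` with `S = Σ^{1/2}` symmetric. Then `φᵀ A w = (S⁻¹ φ)ᵀ (S A) w`, and Cauchy–Schwarz
for the Frobenius inner product gives `|φᵀ A w| ≤ ‖S A‖_F ‖φ‖_{Σ⁻¹} ‖w‖`. Summing over the tasks
and applying Cauchy–Schwarz once more bounds `∑_p |φᵀ (M − M̃) w|` by `W √(γ ∑_p ‖φ‖²_{Σ⁻¹})`
for `M = M̄` and for `M = M_⋆`; the triangle inequality through `M̃` gives the factor `2`.
-/

open Matrix

namespace Matrix

variable {m n : Type*} [Fintype m] [Fintype n]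

/-- Cauchy–Schwarz for the Frobenius inner product `⟪B, u wᵀ⟫ = uᵀ B w`. -/
theorem abs_dotProduct_mulVec_le (u : m → ℝ) (B : Matrix m n ℝ) (w : n → ℝ) :
    |u ⬝ᵥ B *ᵥ w| ≤ √(∑ i, ∑ j, B i j ^ 2) * √(u ⬝ᵥ u) * √(w ⬝ᵥ w) := by
  have h_entrywise : u ⬝ᵥ B *ᵥ w = ∑ q : m × n, B q.1 q.2 * (u q.1 * w q.2) := by
    simp only [Fintype.sum_prod_type, dotProduct, mulVec, Finset.mul_sum]
    exact Finset.sum_congr rfl fun i _ => Finset.sum_congr rfl fun j _ => by ring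
  have h_outer : ∑ q : m × n, (u q.1 * w q.2) ^ 2 = (u ⬝ᵥ u) * (w ⬝ᵥ w) := by
    simp only [Fintype.sum_prod_type, dotProduct, Finset.sum_mul_sum]
    exact Finset.sum_congr rfl fun i _ => Finset.sum_congr rfl fun j _ => by ring
  have hu : 0 ≤ u ⬝ᵥ u := Finset.sum_nonneg fun i _ => mul_self_nonneg (u i)
  rw [h_entrywise, mul_assoc, ← Real.sqrt_mul hu, ← h_outer,
    ← Real.sqrt_mul (by positivity), ← Fintype.sum_prod_type']
  exact Real.abs_le_sqrt (Finset.sum_mul_sq_le_sq_mul_sq _ _ _)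

variable [DecidableEq n]

theorem cfc_sqrt_mul_self {A : Matrix n n ℝ} (hA : A.PosSemidef) :
    cfc Real.sqrt A * cfc Real.sqrt A = A := by
  have hA' : IsSelfAdjoint A := hA.isHermitian
  conv_rhs => rw [← cfc_id' ℝ A]
  rw [← cfc_mul ..]
  apply cfc_congr
  rw [hA.isHermitian.spectrum_real_eq_range_eigenvalues]
  rintro - ⟨i, rfl⟩
  exact Real.mul_self_sqrt (hA.eigenvalues_nonneg i)

theorem transpose_cfc (f : ℝ → ℝ) (A : Matrix n n ℝ) : (cfc f A)ᵀ = cfc f A := by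
  simpa [IsSelfAdjoint, star_eq_conjTranspose] using (cfc_predicate f A : IsSelfAdjoint _)

theorem dotProduct_mulVec_eq_inv_mulVec_dotProduct {S : Matrix n n ℝ} (hS : Sᵀ = S)
    (hS_det : IsUnit S.det) (φ : n → ℝ) (A : Matrix n m ℝ) (w : m → ℝ) :
    φ ⬝ᵥ A *ᵥ w = (S⁻¹ *ᵥ φ) ⬝ᵥ (S * A) *ᵥ w := by
  rw [← mulVec_mulVec, dotProduct_mulVec _ S, ← mulVec_transpose, hS, mulVec_mulVec,
    mul_nonsing_inv _ hS_det, one_mulVec]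

theorem inv_mulVec_dotProduct_self {S : Matrix n n ℝ} (hS : Sᵀ = S) (φ : n → ℝ) :
    (S⁻¹ *ᵥ φ) ⬝ᵥ (S⁻¹ *ᵥ φ) = φ ⬝ᵥ (S * S)⁻¹ *ᵥ φ := by
  rw [dotProduct_mulVec, ← mulVec_transpose, transpose_nonsing_inv, hS, mulVec_mulVec,
    ← mul_inv_rev, dotProduct_comm]

theorem abs_dotProduct_mulVec_le_of_mul_self_eq {S Sig : Matrix n n ℝ} (hS : Sᵀ = S)
    (hSS : S * S = Sig) (hSig : IsUnit Sig) (φ : n → ℝ) (A : Matrix n m ℝ) (w : m → ℝ) :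
    |φ ⬝ᵥ A *ᵥ w| ≤ √(∑ i, ∑ j, (S * A) i j ^ 2) * √(φ ⬝ᵥ Sig⁻¹ *ᵥ φ) * √(w ⬝ᵥ w) := by
  have hS_det : IsUnit S.det := (isUnit_iff_isUnit_det S).1 (isUnit_of_mul_isUnit_left (hSS ▸ hSig))
  rw [dotProduct_mulVec_eq_inv_mulVec_dotProduct hS hS_det, ← hSS,
    ← inv_mulVec_dotProduct_self hS]
  exact abs_dotProduct_mulVec_le _ _ _

end Matrix

theorem Finset.sum_abs_le_mul_sqrt_mul_sum {ι : Type*} (s : Finset ι) {a f g : ι → ℝ}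
    {W γ : ℝ} (hW : 0 ≤ W) (hf : ∀ i, 0 ≤ f i) (hg : ∀ i, 0 ≤ g i)
    (ha : ∀ i ∈ s, |a i| ≤ W * (√(f i) * √(g i))) (hfγ : ∑ i ∈ s, f i ≤ γ) :
    ∑ i ∈ s, |a i| ≤ W * √(γ * ∑ i ∈ s, g i) := by
  calc ∑ i ∈ s, |a i| ≤ ∑ i ∈ s, W * (√(f i) * √(g i)) := Finset.sum_le_sum ha
    _ = W * ∑ i ∈ s, √(f i) * √(g i) := by rw [Finset.mul_sum]
    _ ≤ W * (√(∑ i ∈ s, f i) * √(∑ i ∈ s, g i)) := by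
      gcongr; exact Real.sum_sqrt_mul_sqrt_le s hf hg
    _ ≤ W * (√γ * √(∑ i ∈ s, g i)) := by gcongr
    _ = W * √(γ * ∑ i ∈ s, g i) := by
      rw [Real.sqrt_mul' _ (Finset.sum_nonneg fun i _ => hg i)]

namespace Matrix

variable {ι m n : Type*} [Fintype ι] [Fintype m] [Fintype n] [DecidableEq n]

theorem sum_abs_dotProduct_mulVec_le {Sig : ι → Matrix n n ℝ} (hSig : ∀ p, (Sig p).PosDef)
    (φ : ι → n → ℝ) (B : ι → Matrix n m ℝ) (w : ι → m → ℝ) {W γ : ℝ} (hW : 0 ≤ W)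
    (hw : ∀ p, √(w p ⬝ᵥ w p) ≤ W)
    (hB : ∑ p, ∑ i, ∑ j, (cfc Real.sqrt (Sig p) * B p) i j ^ 2 ≤ γ) :
    ∑ p, |φ p ⬝ᵥ B p *ᵥ w p| ≤ W * √(γ * ∑ p, φ p ⬝ᵥ (Sig p)⁻¹ *ᵥ φ p) := by
  refine Finset.sum_abs_le_mul_sqrt_mul_sum _ hW (fun p => by positivity)
    (fun p => (hSig p).inv.posSemidef.dotProduct_mulVec_nonneg (φ p)) (fun p _ => ?_) hB
  refine (abs_dotProduct_mulVec_le_of_mul_self_eq (transpose_cfc _ _)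
    (cfc_sqrt_mul_self (hSig p).posSemidef) (hSig p).isUnit (φ p) (B p) (w p)).trans ?_
  rw [mul_comm W]
  exact mul_le_mul_of_nonneg_left (hw p) (by positivity)

end Matrix

theorem multitask_bellman_error_core_general
    (P d d' : ℕ) (W γ : ℝ) (hW : 0 ≤ W)
    (Sig : Fin P → Matrix (Fin d) (Fin d) ℝ) (hSig : ∀ p, (Sig p).PosDef)
    (φ : Fin P → Fin d → ℝ)
    (Mbar Mt Mstar : Fin P → Matrix (Fin d) (Fin d') ℝ)
    (w : Fin P → Fin d' → ℝ)
    (hw : ∀ p, Real.sqrt (w p ⬝ᵥ w p) ≤ W)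
    (h1 : ∑ p : Fin P, ∑ i : Fin d, ∑ j : Fin d',
        (((hSig p).isHermitian.eigenvectorUnitary.1 *
          diagonal (Real.sqrt ∘ (hSig p).isHermitian.eigenvalues) *
          (star (hSig p).isHermitian.eigenvectorUnitary : Matrix (Fin d) (Fin d) ℝ) *
          (Mbar p - Mt p)) i j) ^ 2 ≤ γ)
    (h2 : ∑ p : Fin P, ∑ i : Fin d, ∑ j : Fin d',
        (((hSig p).isHermitian.eigenvectorUnitary.1 *
          diagonal (Real.sqrt ∘ (hSig p).isHermitian.eigenvalues) *
          (star (hSig p).isHermitian.eigenvectorUnitary : Matrix (Fin d) (Fin d) ℝ) *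
          (Mstar p - Mt p)) i j) ^ 2 ≤ γ) :
    ∑ p : Fin P, φ p ⬝ᵥ (Mbar p - Mstar p).mulVec (w p)
      ≤ 2 * W * Real.sqrt (γ * ∑ p : Fin P, φ p ⬝ᵥ ((Sig p)⁻¹).mulVec (φ p)) := by
  have h_sqrt : ∀ p, (hSig p).isHermitian.eigenvectorUnitary.1 *
      diagonal (Real.sqrt ∘ (hSig p).isHermitian.eigenvalues) *
      (star (hSig p).isHermitian.eigenvectorUnitary : Matrix (Fin d) (Fin d) ℝ) =
      cfc Real.sqrt (Sig p) :=
    fun p => ((hSig p).isHermitian.cfc_eq Real.sqrt).symm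
  simp only [h_sqrt] at h1 h2
  have h_bar := sum_abs_dotProduct_mulVec_le hSig φ _ w hW hw h1
  have h_star := sum_abs_dotProduct_mulVec_le hSig φ _ w hW hw h2
  have h_split : ∀ p, φ p ⬝ᵥ (Mbar p - Mstar p) *ᵥ w p =
      φ p ⬝ᵥ (Mbar p - Mt p) *ᵥ w p - φ p ⬝ᵥ (Mstar p - Mt p) *ᵥ w p := fun p => by
    rw [← dotProduct_sub, ← sub_mulVec, sub_sub_sub_cancel_right]
  calc ∑ p, φ p ⬝ᵥ (Mbar p - Mstar p) *ᵥ w p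
      ≤ ∑ p, |φ p ⬝ᵥ (Mbar p - Mt p) *ᵥ w p| + ∑ p, |φ p ⬝ᵥ (Mstar p - Mt p) *ᵥ w p| := by
        rw [← Finset.sum_add_distrib]
        refine Finset.sum_le_sum fun p _ => ?_
        rw [h_split p]
        exact (le_abs_self _).trans (abs_sub _ _)
    _ ≤ 2 * W * √(γ * ∑ p, φ p ⬝ᵥ (Sig p)⁻¹ *ᵥ φ p) := by linarith

/-- algebraic core of the multitask Bellman-error bound. If for each task
`p` the matrices `M̄^{(p)}` and `M_⋆^{(p)}` both lie in the confidence set of radius `γ`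
around `M̃^{(p)}` (measured by `∑_p ‖(Σ^{(p)})^{1/2}(· − M̃^{(p)})‖_F² ≤ γ`) and
`‖w^{(p)}‖₂ ≤ W`, then
`∑_p (φ^{(p)})ᵀ(M̄^{(p)} − M_⋆^{(p)}) w^{(p)} ≤ 2W √(γ ∑_p ‖φ^{(p)}‖²_{(Σ^{(p)})⁻¹})`. -/
theorem multitask_bellman_error_core
    (P d d' : ℕ) (W γ : ℝ) (hW : 0 ≤ W) (hγ : 0 ≤ γ)
    (Sig : Fin P → Matrix (Fin d) (Fin d) ℝ) (hSig : ∀ p, (Sig p).PosDef)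
    (φ : Fin P → Fin d → ℝ)
    (Mbar Mt Mstar : Fin P → Matrix (Fin d) (Fin d') ℝ)
    (w : Fin P → Fin d' → ℝ)
    (hw : ∀ p, Real.sqrt (w p ⬝ᵥ w p) ≤ W)
    (h1 : ∑ p : Fin P, ∑ i : Fin d, ∑ j : Fin d',
        (((hSig p).isHermitian.eigenvectorUnitary.1 *
          diagonal (Real.sqrt ∘ (hSig p).isHermitian.eigenvalues) *
          (star (hSig p).isHermitian.eigenvectorUnitary : Matrix (Fin d) (Fin d) ℝ) *
          (Mbar p - Mt p)) i j) ^ 2 ≤ γ)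
    (h2 : ∑ p : Fin P, ∑ i : Fin d, ∑ j : Fin d',
        (((hSig p).isHermitian.eigenvectorUnitary.1 *
          diagonal (Real.sqrt ∘ (hSig p).isHermitian.eigenvalues) *
          (star (hSig p).isHermitian.eigenvectorUnitary : Matrix (Fin d) (Fin d) ℝ) *
          (Mstar p - Mt p)) i j) ^ 2 ≤ γ) :
    ∑ p : Fin P, φ p ⬝ᵥ (Mbar p - Mstar p).mulVec (w p)
      ≤ 2 * W * Real.sqrt (γ * ∑ p : Fin P, φ p ⬝ᵥ ((Sig p)⁻¹).mulVec (φ p)) :=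
  multitask_bellman_error_core_general P d d' W γ hW Sig hSig φ Mbar Mt Mstar w hw h1 h2
end
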